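/- arXiv:1412.4423 — 9 statements merged into one kernel-verified Lean document; each statement's English description precedes it below -/
import Mathlib

section
/- Let g(z) = Σ_{j=1}^t e^{a_j z + b_j} be a univariate exponential sum with real frequencies a_1 < a_2 < ... < a_t and complex coefficients b_j. Let w ∈ ℝ and ℓ ∈ {2,...,t} be such that a_ℓ w + Re(b_ℓ) ≥ a_j w + Re(b_j) for all j ∈ [ℓ], and let δ_ℓ := min_{p≠q, p,q∈[ℓ]} |a_p − a_q|. Then for any N ∈ ℕ with N ≥ 1 and any z ∈ ℂ with Re(z) ≥ w + log(N+1)/δ_ℓ, we have |Σ_{j=1}^{ℓ−1} e^{a_j z + b_j}| < (1/N)|e^{a_ℓ z + b_ℓ}|. -/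
/-!
Put `x = 1/(N+1)`. Along the first `ℓ` frequencies consecutive gaps are at least `δ`, so
`a_ℓ - a_j ≥ δ (ℓ - j)`. Since the `ℓ`-th term dominates at `w`, moving from `w` to `Re z`,
which lies at least `log (N+1) / δ` further right, shrinks the `j`-th term relative to the
`ℓ`-th one by a factor `x^(ℓ - j)`. Hence the low-order terms are bounded by
`∑_{k ≥ 1} x^k = 1/N` times the `ℓ`-th one, with strict inequality since the sum is finite.
-/

open Finset

lemma mul_sub_le_sub_of_gap {n : ℕ} {a : Fin n → ℝ} {δ : ℝ} {i j : Fin n}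
    (hgap : ∀ p q : Fin n, i ≤ p → p < q → q ≤ j → δ ≤ a q - a p) (hij : i ≤ j) :
    δ * ((j : ℕ) - i : ℕ) ≤ a j - a i := by
  obtain ⟨j, hj⟩ := j
  change (i : ℕ) ≤ j at hij
  rw [Nat.cast_sub hij]
  revert hj hgap
  induction j, hij using Nat.le_induction with
  | base => simp
  | succ m him ih =>
    intro hj hgap
    have hm : m < n := by omega
    have hprev := ih hm fun p q hip hpq hqm ↦ hgap p q hip hpq (hqm.trans (by simp [Fin.le_def]))
    have hstep := hgap ⟨m, hm⟩ ⟨m + 1, hj⟩ him (by simp [Fin.lt_def]) le_rfl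
    push_cast at hprev ⊢
    linarith

lemma norm_exp_le_of_re_le {α β : ℝ} {b c : ℂ} {w : ℝ} (h : α * w + b.re ≤ β * w + c.re)
    (z : ℂ) :
    ‖Complex.exp (α * z + b)‖ ≤ Real.exp ((α - β) * (z.re - w)) * ‖Complex.exp (β * z + c)‖ := by
  simp only [Complex.norm_exp, Complex.add_re, Complex.re_ofReal_mul, ← Real.exp_add,
    Real.exp_le_exp]
  linear_combination h

lemma exp_neg_mul_le_inv_pow {c δ s R : ℝ} {k : ℕ} (hδ : 0 < δ) (hR : 1 ≤ R) (hc : δ * k ≤ c)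
    (hs : Real.log R / δ ≤ s) : Real.exp (-(c * s)) ≤ R⁻¹ ^ k := by
  have hlog : 0 ≤ Real.log R / δ := div_nonneg (Real.log_nonneg hR) hδ.le
  have hks : k * Real.log R ≤ c * s :=
    calc (k : ℝ) * Real.log R = δ * k * (Real.log R / δ) := by field_simp
      _ ≤ c * s := mul_le_mul hc hs hlog ((mul_nonneg hδ.le k.cast_nonneg).trans hc)
  calc Real.exp (-(c * s)) ≤ Real.exp (k * -Real.log R) := Real.exp_le_exp.mpr (by linarith)
    _ = R⁻¹ ^ k := by rw [Real.exp_nat_mul, Real.exp_neg, Real.exp_log (by linarith)]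

lemma sum_range_inv_pow_succ_lt {r : ℝ} (hr : 0 < r) (n : ℕ) :
    ∑ k ∈ range n, (r + 1)⁻¹ ^ (k + 1) < r⁻¹ := by
  have hx : 1 - (r + 1)⁻¹ = r * (r + 1)⁻¹ := by field_simp; ring
  have hsum : r * ∑ k ∈ range n, (r + 1)⁻¹ ^ (k + 1) = 1 - (r + 1)⁻¹ ^ n := by
    simp only [pow_succ', ← mul_sum, ← mul_assoc, ← hx, mul_neg_geom_sum]
  rw [← mul_lt_mul_iff_right₀ hr, hsum, mul_inv_cancel₀ hr.ne', sub_lt_self_iff]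
  positivity

lemma Fin.sum_Iio_pow_sub {n : ℕ} (ℓ : Fin n) (x : ℝ) :
    ∑ j ∈ Iio ℓ, x ^ ((ℓ : ℕ) - j) = ∑ k ∈ range ℓ, x ^ (k + 1) := by
  rw [← sum_range_reflect, ← Nat.Iio_eq_range, ← Fin.map_valEmbedding_Iio, sum_map]
  refine sum_congr rfl fun j hj ↦ ?_
  have : j < ℓ := mem_Iio.mp hj
  simp only [Fin.valEmbedding_apply]
  congr 1
  omega

theorem lowOrderTerms_lt_general (t : ℕ) (a : Fin t → ℝ) (b : Fin t → ℂ) (ha : StrictMono a)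
    (ℓ : Fin t) (w : ℝ)
    (hw : ∀ j : Fin t, j ≤ ℓ → a j * w + (b j).re ≤ a ℓ * w + (b ℓ).re)
    (δ : ℝ)
    (hδ : IsLeast {d : ℝ | ∃ p q : Fin t, p ≤ ℓ ∧ q ≤ ℓ ∧ p ≠ q ∧ d = |a p - a q|} δ)
    (N : ℕ) (hN : 1 ≤ N) (z : ℂ) (hz : w + Real.log (N + 1) / δ ≤ z.re) :
    ‖∑ j ∈ Finset.Iio ℓ, Complex.exp (a j * z + b j)‖
      < (1 / N) * ‖Complex.exp (a ℓ * z + b ℓ)‖ := by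
  obtain ⟨⟨p, q, -, -, hpq, hδ_eq⟩, hδ_le⟩ := hδ
  have hδ_pos : 0 < δ := hδ_eq ▸ abs_pos.mpr (sub_ne_zero.mpr (ha.injective.ne hpq))
  have hgap : ∀ p q : Fin t, p < q → q ≤ ℓ → δ ≤ a q - a p := fun p q hpq hq ↦
    abs_of_pos (sub_pos.mpr (ha hpq)) ▸ hδ_le ⟨q, p, hq, hpq.le.trans hq, hpq.ne', rfl⟩
  have hterm : ∀ j ∈ Iio ℓ, ‖Complex.exp (a j * z + b j)‖
      ≤ ((N : ℝ) + 1)⁻¹ ^ ((ℓ : ℕ) - j) * ‖Complex.exp (a ℓ * z + b ℓ)‖ := by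
    intro j hj
    have hjℓ := (mem_Iio.mp hj).le
    refine (norm_exp_le_of_re_le (hw j hjℓ) z).trans
      (mul_le_mul_of_nonneg_right ?_ (norm_nonneg _))
    rw [show (a j - a ℓ) * (z.re - w) = -((a ℓ - a j) * (z.re - w)) by ring]
    exact exp_neg_mul_le_inv_pow hδ_pos (by simp)
      (mul_sub_le_sub_of_gap (fun p q _ hpq hq ↦ hgap p q hpq hq) hjℓ) (by linarith)
  calc ‖∑ j ∈ Iio ℓ, Complex.exp (a j * z + b j)‖
      ≤ ∑ j ∈ Iio ℓ, ((N : ℝ) + 1)⁻¹ ^ ((ℓ : ℕ) - j) * ‖Complex.exp (a ℓ * z + b ℓ)‖ :=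
        (norm_sum_le _ _).trans (sum_le_sum hterm)
    _ < (1 / N) * ‖Complex.exp (a ℓ * z + b ℓ)‖ := by
        rw [← sum_mul, Fin.sum_Iio_pow_sub, one_div]
        exact mul_lt_mul_of_pos_right (sum_range_inv_pow_succ_lt (Nat.cast_pos.mpr hN) ℓ)
          (norm_pos_iff.mpr (Complex.exp_ne_zero _))

/-- domination of the low-order terms of a univariate exponential
sum to the right of a point `w` where the `ℓ`-th term dominates the first `ℓ` terms. -/
theorem lowOrderTerms_lt (t : ℕ) (a : Fin t → ℝ) (b : Fin t → ℂ) (ha : StrictMono a)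
    (ℓ : Fin t) (hℓ : 0 < (ℓ : ℕ)) (w : ℝ)
    (hw : ∀ j : Fin t, j ≤ ℓ → a j * w + (b j).re ≤ a ℓ * w + (b ℓ).re)
    (δ : ℝ)
    (hδ : IsLeast {d : ℝ | ∃ p q : Fin t, p ≤ ℓ ∧ q ≤ ℓ ∧ p ≠ q ∧ d = |a p - a q|} δ)
    (N : ℕ) (hN : 1 ≤ N) (z : ℂ) (hz : w + Real.log (N + 1) / δ ≤ z.re) :
    ‖∑ j ∈ Finset.Iio ℓ, Complex.exp (a j * z + b j)‖
      < (1 / N) * ‖Complex.exp (a ℓ * z + b ℓ)‖ :=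
  lowOrderTerms_lt_general t a b ha ℓ w hw δ hδ N hN z hz
end

section
/- Let g(z) = Σ_{j=1}^t e^{a_j z + b_j} with real frequencies a_1 < ... < a_t, t ≥ 2, and coefficients b_j ∈ ℂ. Define δ(g) := min_{p≠q} |a_p − a_q| and Trop(g) := { w ∈ ℝ : max_j e^{a_j w + Re(b_j)} is attained for at least two distinct indices j }. Let w_max := max Trop(g). Then every complex root ζ of g satisfies Re(ζ) < w_max + log 2 / δ(g). -/
/-!
The modulus of `e^{a_j ζ + b_j}` is `e^{a_j r + Re b_j}` with `r = Re ζ`, so the tropical picture is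
the upper envelope of the lines `w ↦ a_j w + Re b_j`. Beyond `max Trop(g)` the line of largest slope
`a_t` lies on top (the rightmost point where it crosses another line is itself tropical), and every
further step of `log 2 / δ` to the right raises it by at least
`(a_t - a_j) log 2 / δ ≥ (t - j) log 2` over the `j`-th line. Hence at
`r ≥ max Trop(g) + log 2 / δ` the `j`-th term is at most `2^{-(t-j)}` times the last one, and the
last term outweighs all others together, since `∑_{j<t} 2^{-(t-j)} < 1`.
-/

noncomputable section

/-- The Archimedean tropical variety of a univariate exponential sum:
points where the maximum of `a j * w + Re (b j)` is attained at least twice. -/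
def Trop (t : ℕ) (a : Fin t → ℝ) (b : Fin t → ℂ) : Set ℝ :=
  {w | ∃ j k : Fin t, j ≠ k ∧
    (∀ i : Fin t, a i * w + (b i).re ≤ a j * w + (b j).re) ∧
    a j * w + (b j).re = a k * w + (b k).re}

open Finset Real

section Lines

variable {ι : Type*}

def crossing (a : ι → ℝ) (b : ι → ℂ) (j k : ι) : ℝ :=
  ((b j).re - (b k).re) / (a k - a j)

variable {a : ι → ℝ} {b : ι → ℂ}

lemma line_sub_line_eq_mul_sub_crossing {j k : ι} (h : a j ≠ a k) (w : ℝ) :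
    (a k * w + (b k).re) - (a j * w + (b j).re) = (a k - a j) * (w - crossing a b j k) := by
  unfold crossing
  field_simp [sub_ne_zero.2 h.symm]
  ring

lemma line_le_line_iff_crossing_le {j k : ι} (h : a j < a k) {w : ℝ} :
    a j * w + (b j).re ≤ a k * w + (b k).re ↔ crossing a b j k ≤ w := by
  rw [← sub_nonneg, line_sub_line_eq_mul_sub_crossing h.ne,
    mul_nonneg_iff_of_pos_left (sub_pos.2 h), sub_nonneg]

end Lines

section Trop

variable {n : ℕ} {a : Fin (n + 1) → ℝ} {b : Fin (n + 1) → ℂ}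

lemma line_le_line_last_of_crossing_le (ha : StrictMono a) {w : ℝ}
    (hw : ∀ i : Fin n, crossing a b i.castSucc (Fin.last n) ≤ w) (j : Fin (n + 1)) :
    a j * w + (b j).re ≤ a (Fin.last n) * w + (b (Fin.last n)).re := by
  cases j using Fin.lastCases with
  | last => exact le_rfl
  | cast i => exact (line_le_line_iff_crossing_le (ha (Fin.castSucc_lt_last i))).2 (hw i)

lemma sup'_crossing_last_mem_trop [NeZero n] (ha : StrictMono a) :
    univ.sup' univ_nonempty (fun i : Fin n => crossing a b i.castSucc (Fin.last n)) ∈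
      Trop (n + 1) a b := by
  set x : Fin n → ℝ := fun i => crossing a b i.castSucc (Fin.last n)
  obtain ⟨i, -, hi⟩ := exists_mem_eq_sup' univ_nonempty x
  refine ⟨Fin.last n, i.castSucc, (Fin.castSucc_lt_last i).ne',
    line_le_line_last_of_crossing_le ha fun k => le_sup' x (mem_univ k), ?_⟩
  have h := line_sub_line_eq_mul_sub_crossing (b := b) (ha (Fin.castSucc_lt_last i)).ne
    (univ.sup' univ_nonempty x)
  rw [hi] at h ⊢
  rwa [sub_self, mul_zero, sub_eq_zero] at h

lemma line_le_line_last_of_mem_upperBounds [NeZero n] (ha : StrictMono a) {w : ℝ}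
    (hw : w ∈ upperBounds (Trop (n + 1) a b)) (j : Fin (n + 1)) :
    a j * w + (b j).re ≤ a (Fin.last n) * w + (b (Fin.last n)).re :=
  line_le_line_last_of_crossing_le ha
    (fun i => (le_sup' _ (mem_univ i)).trans (hw (sup'_crossing_last_mem_trop ha))) j

end Trop

lemma natCast_sub_mul_le_last_sub {n : ℕ} {a : Fin (n + 1) → ℝ} {δ : ℝ}
    (h : ∀ i : Fin n, δ ≤ a i.succ - a i.castSucc) (i : Fin (n + 1)) :
    (n - i : ℕ) * δ ≤ a (Fin.last n) - a i := by
  induction i using Fin.reverseInduction with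
  | last => simp
  | cast i ih =>
    have hsucc : (n - i.castSucc : ℕ) = (n - i.succ : ℕ) + 1 := by
      simp only [Fin.val_castSucc, Fin.val_succ]
      omega
    rw [hsucc, Nat.cast_succ, add_one_mul]
    linarith [h i]

lemma add_natCast_mul_log_two_le {p q β γ δ w r : ℝ} {k : ℕ} (hslope : k * δ ≤ q - p)
    (hδ : 0 < δ) (hw : p * w + β ≤ q * w + γ) (hr : w + log 2 / δ ≤ r) :
    p * r + β + k * log 2 ≤ q * r + γ := by
  have hrise : k * log 2 ≤ (q - p) * (r - w) :=
    calc (k : ℝ) * log 2 = k * δ * (log 2 / δ) := by field_simp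
      _ ≤ (q - p) * (r - w) := by
        gcongr
        · linarith [mul_nonneg k.cast_nonneg hδ.le]
        · linarith
  linear_combination hrise + hw

lemma exp_le_exp_mul_half_pow {x y : ℝ} {k : ℕ} (h : x + k * log 2 ≤ y) :
    exp x ≤ exp y * (1 / 2) ^ k :=
  calc exp x ≤ exp (y - k * log 2) := exp_le_exp.2 (by linarith)
    _ = exp y * (1 / 2) ^ k := by
      rw [exp_sub, exp_nat_mul, exp_log two_pos, one_div, inv_pow, div_eq_mul_inv]

lemma sum_half_pow_sub (n : ℕ) : ∑ i : Fin n, (1 / 2 : ℝ) ^ (n - i : ℕ) = 1 - (1 / 2) ^ n := by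
  induction n with
  | zero => simp
  | succ n ih =>
    rw [Fin.sum_univ_succ]
    simp only [Fin.val_zero, Fin.val_succ, Nat.sub_zero, Nat.add_sub_add_right, ih]
    ring

lemma sum_ne_zero_of_norm_le_half_pow {E : Type*} [NormedAddCommGroup E] {n : ℕ}
    {z : Fin (n + 1) → E} (hlast : z (Fin.last n) ≠ 0)
    (h : ∀ i : Fin n, ‖z i.castSucc‖ ≤ ‖z (Fin.last n)‖ * (1 / 2) ^ (n - i : ℕ)) :
    ∑ i, z i ≠ 0 := by
  rw [Fin.sum_univ_castSucc]
  intro hsum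
  have hle : ‖z (Fin.last n)‖ ≤ ‖z (Fin.last n)‖ * (1 - (1 / 2) ^ n) :=
    calc ‖z (Fin.last n)‖ = ‖∑ i : Fin n, z i.castSucc‖ := by
          rw [eq_neg_of_add_eq_zero_right hsum, norm_neg]
      _ ≤ ∑ i : Fin n, ‖z i.castSucc‖ := norm_sum_le _ _
      _ ≤ ∑ i : Fin n, ‖z (Fin.last n)‖ * (1 / 2) ^ (n - i : ℕ) := sum_le_sum fun i _ => h i
      _ = ‖z (Fin.last n)‖ * (1 - (1 / 2) ^ n) := by rw [← mul_sum, sum_half_pow_sub]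
  nlinarith [norm_pos_iff.2 hlast, pow_pos (by norm_num : (0 : ℝ) < 1 / 2) n]

/-- every complex root of a univariate exponential `t`-sum has real part
less than `max Trop(g) + log 2 / δ(g)`. -/
theorem re_root_lt_max_trop (t : ℕ) (ht : 2 ≤ t) (a : Fin t → ℝ) (b : Fin t → ℂ)
    (ha : StrictMono a) (δ : ℝ)
    (hδ : IsLeast {d : ℝ | ∃ p q : Fin t, p ≠ q ∧ d = |a p - a q|} δ)
    (wmax : ℝ) (hwmax : IsGreatest (Trop t a b) wmax)
    (ζ : ℂ) (hζ : ∑ j, Complex.exp (a j * ζ + b j) = 0) :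
    ζ.re < wmax + Real.log 2 / δ := by
  obtain ⟨n, rfl⟩ : ∃ n, t = n + 1 := ⟨t - 1, by omega⟩
  have : NeZero n := ⟨by omega⟩
  have hδpos : 0 < δ := by
    obtain ⟨p, q, hpq, rfl⟩ := hδ.1
    exact abs_pos.2 (sub_ne_zero.2 (ha.injective.ne hpq))
  have hgap (i : Fin n) : δ ≤ a i.succ - a i.castSucc := by
    have hlt : i.castSucc < i.succ := Fin.castSucc_lt_succ
    simpa [abs_of_pos (sub_pos.2 (ha hlt))] using hδ.2 ⟨i.succ, i.castSucc, hlt.ne', rfl⟩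
  by_contra! hr
  refine sum_ne_zero_of_norm_le_half_pow (Complex.exp_ne_zero _) (fun i => ?_) hζ
  simp only [Complex.norm_exp, Complex.add_re, Complex.re_ofReal_mul]
  exact exp_le_exp_mul_half_pow <| add_natCast_mul_log_two_le
    (natCast_sub_mul_le_last_sub hgap i.castSucc) hδpos
    (line_le_line_last_of_mem_upperBounds ha hwmax.2 _) hr
end
end

section
/- Let g(z) = Σ_{j=1}^t e^{a_j z + b_j} with real frequencies a_1 < ... < a_t, t ≥ 2, and b_j ∈ ℂ, with δ(g) := min_{p≠q}|a_p − a_q|. Let w_min := min Trop(g) and w_max := max Trop(g). Then the real part of every complex root of g lies in the open interval (w_min − log 2/δ(g), w_max + log 2/δ(g)). -/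
/-!
At a root `ζ` no term of `g` can exceed in modulus the sum of the moduli of the others. Past
`max Trop(g)` the term of largest frequency `a_T` dominates all others, and at
`Re ζ ≥ max Trop(g) + log 2 / δ` it dominates the term of index `j` by a factor
`e^{(a_T - a_j)(Re ζ - max Trop(g))} ≥ 2^{T - j}`, since consecutive frequencies are at least
`δ` apart. As `∑_{k ≥ 1} 2^{-k} = 1`, the other terms are then too small to cancel it. The lower
bound is the same argument applied to `a ↦ -a`, `ζ ↦ -ζ`, which leaves `g` unchanged and negates
`Trop(g)`.
-/

noncomputable section

open Finset Function

theorem Finset.sum_ne_zero_of_sum_norm_erase_lt {ι E : Type*} [SeminormedAddCommGroup E]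
    [DecidableEq ι] {s : Finset ι} {T : ι} (hT : T ∈ s) (z : ι → E)
    (h : ∑ j ∈ s.erase T, ‖z j‖ < ‖z T‖) : ∑ j ∈ s, z j ≠ 0 := by
  intro hsum
  have hzT : z T = -∑ j ∈ s.erase T, z j :=
    eq_neg_of_add_eq_zero_left ((add_sum_erase s z hT).trans hsum)
  have : ‖z T‖ ≤ ∑ j ∈ s.erase T, ‖z j‖ := by
    rw [hzT, norm_neg]
    exact norm_sum_le _ _
  exact this.not_gt h

theorem sum_one_half_pow_lt_one {S : Finset ℕ} (hS : 0 ∉ S) : ∑ k ∈ S, (1 / 2 : ℝ) ^ k < 1 := by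
  obtain ⟨N, hN⟩ : ∃ N, S ⊆ Ico 1 N :=
    ⟨S.sup id + 1, fun k hk => mem_Ico.2 ⟨Nat.one_le_iff_ne_zero.2 (ne_of_mem_of_not_mem hk hS),
      Nat.lt_succ_of_le (le_sup (f := id) hk)⟩⟩
  calc ∑ k ∈ S, (1 / 2 : ℝ) ^ k
      ≤ ∑ k ∈ Ico 1 N, (1 / 2 : ℝ) ^ k :=
        sum_le_sum_of_subset_of_nonneg hN fun _ _ _ => by positivity
    _ < 1 := by
      rcases Nat.lt_or_ge N 1 with hN1 | hN1
      · simp [Ico_eq_empty_of_le hN1.le]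
      · have : (0 : ℝ) < (1 / 2) ^ N := by positivity
        rw [geom_sum_Ico (by norm_num) hN1, div_lt_one_of_neg (by norm_num)]
        linarith

theorem sum_erase_one_half_pow_lt_one {ι : Type*} [DecidableEq ι] (s : Finset ι) {d : ι → ℕ}
    (hd : Injective d) {T : ι} (hdT : d T = 0) : ∑ j ∈ s.erase T, (1 / 2 : ℝ) ^ d j < 1 := by
  rw [← sum_image hd.injOn]
  refine sum_one_half_pow_lt_one fun h0 => ?_
  obtain ⟨j, hj, hdj⟩ := mem_image.1 h0
  exact ne_of_mem_erase hj (hd (hdj.trans hdT.symm))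

theorem StrictMono.nat_mul_le_sub_of_val_add_eq {t : ℕ} {a : Fin t → ℝ} (ha : StrictMono a) {δ : ℝ}
    (hδ : ∀ p q, p ≠ q → δ ≤ |a p - a q|) (n : ℕ) :
    ∀ i j : Fin t, i.val + n = j.val → n * δ ≤ a j - a i := by
  induction n with
  | zero =>
    intro i j hij
    simp [Fin.ext (by omega : i.val = j.val)]
  | succ n ih =>
    intro i j hij
    let i' : Fin t := ⟨i.val + 1, by omega⟩
    have hii' : i < i' := Fin.lt_def.2 (Nat.lt_succ_self _)
    have hstep : δ ≤ a i' - a i := by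
      simpa [abs_of_pos (sub_pos.2 (ha hii'))] using hδ i' i hii'.ne'
    have := ih i' j (by simp only [i']; omega)
    push_cast
    linarith

theorem neg_mem_Trop_neg {t : ℕ} {a : Fin t → ℝ} {b : Fin t → ℂ} {w : ℝ} (hw : w ∈ Trop t a b) :
    -w ∈ Trop t (-a) b := by
  obtain ⟨j, k, hjk, hmax, heq⟩ := hw
  exact ⟨j, k, hjk, fun i => by simpa using hmax i, by simpa using heq⟩

/-- Beyond the crossing points `(Re b_i - Re b_T) / (a_T - a_i)` the term `T` dominates; the largest
crossing point is itself tropical. -/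
theorem le_top_term_of_mem_upperBounds_Trop {t : ℕ} {a : Fin t → ℝ} {b : Fin t → ℂ} {T : Fin t}
    (hT : ∀ i, i ≠ T → a i < a T) {w : ℝ} (hw : w ∈ upperBounds (Trop t a b)) (j : Fin t) :
    a j * w + (b j).re ≤ a T * w + (b T).re := by
  classical
  set x : Fin t → ℝ := fun i => ((b i).re - (b T).re) / (a T - a i)
  have hcross : ∀ i, i ≠ T → ∀ v, a i * v + (b i).re ≤ a T * v + (b T).re ↔ x i ≤ v := by
    intro i hi v
    rw [div_le_iff₀ (sub_pos.2 (hT i hi))]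
    constructor <;> intro <;> linarith
  by_contra! hj
  have hjT : j ≠ T := by rintro rfl; exact hj.false
  obtain ⟨i, hi, hmax⟩ := exists_max_image (univ.erase T) x ⟨j, mem_erase.2 ⟨hjT, mem_univ j⟩⟩
  have hiT := ne_of_mem_erase hi
  have hxi : x i ∈ Trop t a b := by
    refine ⟨T, i, hiT.symm, fun k => ?_, ?_⟩
    · rcases eq_or_ne k T with rfl | hkT
      · exact le_rfl
      · exact (hcross k hkT _).2 (hmax k (mem_erase.2 ⟨hkT, mem_univ k⟩))
    · have : (a T - a i) * x i = (b i).re - (b T).re :=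
        mul_div_cancel₀ _ (sub_pos.2 (hT i hiT)).ne'
      linarith
  have hwj : w < x j := not_le.1 fun h => hj.not_ge ((hcross j hjT w).2 h)
  exact (hw hxi).not_gt (hwj.trans_le (hmax j (mem_erase.2 ⟨hjT, mem_univ j⟩)))

theorem norm_exp_le_mul_one_half_pow {a : ℝ} {β aT βT w δ : ℝ} {n : ℕ} (hδ : 0 < δ)
    (hgap : n * δ ≤ aT - a) (hdom : a * w + β ≤ aT * w + βT) {x : ℝ}
    (hx : w + Real.log 2 / δ ≤ x) :
    Real.exp (a * x + β) ≤ Real.exp (aT * x + βT) * (1 / 2) ^ n := by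
  have hlog : Real.log 2 ≤ δ * (x - w) := (div_le_iff₀' hδ).1 (by linarith)
  have hs : 0 ≤ x - w := by
    have : 0 ≤ Real.log 2 / δ := by positivity
    linarith
  have h1 : n * Real.log 2 ≤ n * (δ * (x - w)) := mul_le_mul_of_nonneg_left hlog n.cast_nonneg
  have h2 : n * δ * (x - w) ≤ (aT - a) * (x - w) := mul_le_mul_of_nonneg_right hgap hs
  rw [one_div, inv_pow, ← Real.exp_log (by positivity : (0 : ℝ) < 2 ^ n), Real.log_pow,
    ← Real.exp_neg, ← Real.exp_add, Real.exp_le_exp]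
  linear_combination hdom + h1 + h2

theorem re_lt_of_dominant {ι : Type*} [Fintype ι] {a : ι → ℝ} {b : ι → ℂ} {T : ι} {w δ : ℝ}
    (hδ : 0 < δ) {d : ι → ℕ} (hd : Injective d) (hdT : d T = 0)
    (hgap : ∀ j, d j * δ ≤ a T - a j) (hdom : ∀ j, a j * w + (b j).re ≤ a T * w + (b T).re)
    {ζ : ℂ} (hζ : ∑ j, Complex.exp (a j * ζ + b j) = 0) : ζ.re < w + Real.log 2 / δ := by
  classical
  by_contra! hx
  set z : ι → ℂ := fun j => Complex.exp (a j * ζ + b j)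
  have hnorm : ∀ j, ‖z j‖ = Real.exp (a j * ζ.re + (b j).re) := fun j => by
    simp [z, Complex.norm_exp]
  refine sum_ne_zero_of_sum_norm_erase_lt (mem_univ T) z ?_ hζ
  calc ∑ j ∈ univ.erase T, ‖z j‖
      ≤ ∑ j ∈ univ.erase T, ‖z T‖ * (1 / 2) ^ d j := sum_le_sum fun j _ => by
        rw [hnorm, hnorm]
        exact norm_exp_le_mul_one_half_pow hδ (hgap j) (hdom j) hx
    _ < ‖z T‖ * 1 := by
      rw [← mul_sum]
      exact mul_lt_mul_of_pos_left (sum_erase_one_half_pow_lt_one _ hd hdT) (by simp [z])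
    _ = ‖z T‖ := mul_one _

theorem re_root_mem_Ioo_general (t : ℕ) (a : Fin t → ℝ) (b : Fin t → ℂ)
    (ha : StrictMono a) (δ : ℝ)
    (hδ : IsLeast {d : ℝ | ∃ p q : Fin t, p ≠ q ∧ d = |a p - a q|} δ)
    (wmin wmax : ℝ) (hwmin : IsLeast (Trop t a b) wmin)
    (hwmax : IsGreatest (Trop t a b) wmax)
    (ζ : ℂ) (hζ : ∑ j, Complex.exp (a j * ζ + b j) = 0) :
    ζ.re ∈ Set.Ioo (wmin - Real.log 2 / δ) (wmax + Real.log 2 / δ) := by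
  obtain ⟨p, q, hpq, hδpq⟩ := hδ.1
  have hδ0 : 0 < δ := hδpq ▸ abs_pos.2 (sub_ne_zero.2 (ha.injective.ne hpq))
  obtain ⟨n, rfl⟩ : ∃ n, t = n + 1 := Nat.exists_eq_succ_of_ne_zero p.pos.ne'
  have hgap := ha.nat_mul_le_sub_of_val_add_eq fun p q hpq => hδ.2 ⟨p, q, hpq, rfl⟩
  constructor
  · have hdom := le_top_term_of_mem_upperBounds_Trop (a := -a) (b := b) (T := 0)
      (fun i hi => neg_lt_neg (ha (Fin.pos_iff_ne_zero.2 hi)))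
      (fun w hw => le_neg_of_le_neg (hwmin.2 (by simpa using neg_mem_Trop_neg hw)))
    have := re_lt_of_dominant hδ0 Fin.val_injective rfl
      (fun j => by simpa [neg_add_eq_sub] using hgap j 0 j (zero_add _)) hdom
      (ζ := -ζ) (by simpa using hζ)
    simp only [Complex.neg_re] at this
    linarith
  · exact re_lt_of_dominant hδ0 (Fin.val_injective.comp Fin.rev_injective) (by simp)
      (fun j => hgap _ j (Fin.last n) (by simp [Fin.val_rev]; omega))
      (le_top_term_of_mem_upperBounds_Trop (T := Fin.last n)
        (fun i hi => ha (Fin.lt_last_iff_ne_last (a := i) |>.2 hi)) hwmax.2) hζ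

/-- the real part of every complex root of `g` lies in the open interval
`(min Trop(g) - log 2/δ(g), max Trop(g) + log 2/δ(g))`. -/
theorem re_root_mem_Ioo (t : ℕ) (ht : 2 ≤ t) (a : Fin t → ℝ) (b : Fin t → ℂ)
    (ha : StrictMono a) (δ : ℝ)
    (hδ : IsLeast {d : ℝ | ∃ p q : Fin t, p ≠ q ∧ d = |a p - a q|} δ)
    (wmin wmax : ℝ) (hwmin : IsLeast (Trop t a b) wmin)
    (hwmax : IsGreatest (Trop t a b) wmax)
    (ζ : ℂ) (hζ : ∑ j, Complex.exp (a j * ζ + b j) = 0) :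
    ζ.re ∈ Set.Ioo (wmin - Real.log 2 / δ) (wmax + Real.log 2 / δ) :=
  re_root_mem_Ioo_general t a b ha δ hδ wmin wmax hwmin hwmax ζ hζ
end
end

section
/- Let g(z) = Σ_{j=1}^t e^{a_j z + b_j} with real frequencies a_1 < ... < a_t and b_j ∈ ℂ, and let δ := min_{p≠q}|a_p − a_q|. Suppose w_1 < w_2 are consecutive points of Trop(g) (i.e., no point of Trop(g) lies strictly between them) with w_2 − w_1 ≥ 2 log 3/δ. Then g has no complex roots z with Re(z) ∈ [w_1 + log 3/δ, w_2 − log 3/δ]. -/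
noncomputable section

/-!
Let `f i x = a i * x + Re (b i)`, so that `|exp (a i * z + b i)| = exp (f i (Re z))`. Since
no point of `Trop g` lies in `(w₁, w₂)`, by connectedness a single term `j` dominates all
others on `[w₁, w₂]`. Because `f j - f i` is affine, nonnegative at both ends, with slope of
absolute value at least `|i - j| δ`, at distance `log 3 / δ` from both ends it is at least
`|i - j| log 3`. Hence the `i`-th term has modulus at most `3^(-|i - j|)` times the `j`-th, and
the other terms, whose weights sum to less than `2 · (1/3 + 1/9 + ⋯) = 1`, cannot cancel the
`j`-th one.
-/

open Finset Real

theorem IsPreconnected.forall_apply_le_of_mem_closure {ι X : Type*} [Finite ι]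
    [TopologicalSpace X] {f : ι → X → ℝ} (hf : ∀ i, Continuous (f i)) {s : Set X}
    (hs : IsPreconnected s)
    (hnotie : ∀ x ∈ s, ∀ i k, i ≠ k → (∀ l, f l x ≤ f i x) → f i x ≠ f k x)
    {j : ι} {x₀ : X} (hx₀ : x₀ ∈ s) (hj : ∀ i, f i x₀ ≤ f j x₀) :
    ∀ x ∈ closure s, ∀ i, f i x ≤ f j x := by
  set u := {x | ∀ i, i ≠ j → f i x < f j x}
  set C := {x | ∀ i, f i x ≤ f j x}
  have hu : IsOpen u := by
    simp only [u, Set.ofPred_forall]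
    exact isOpen_iInter_of_finite fun i => isOpen_iInter_of_finite fun _ =>
      isOpen_lt (hf i) (hf j)
  have hC : IsClosed C := by
    simp only [C, Set.ofPred_forall]
    exact isClosed_iInter fun i => isClosed_le (hf i) (hf j)
  have huC : u ⊆ C := fun x hx i => by
    rcases eq_or_ne i j with rfl | hij
    · exact le_rfl
    · exact (hx i hij).le
  have hCu : C ∩ s ⊆ u := fun x ⟨hxC, hxs⟩ i hij =>
    (hxC i).lt_of_ne (hnotie x hxs j i hij.symm hxC).symm
  have hsu : s ⊆ u := hs.subset_of_closure_inter_subset hu ⟨x₀, hx₀, hCu ⟨hj, hx₀⟩⟩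
    fun x ⟨hx, hxs⟩ => hCu ⟨closure_minimal huC hC hx, hxs⟩
  exact closure_minimal (hsu.trans huC) hC

theorem abs_sub_mul_le_sub_of_le_of_le {α β ρ σ u v w L : ℝ} (hu : α * u + ρ ≤ β * u + σ)
    (hv : α * v + ρ ≤ β * v + σ) (hwu : u + L ≤ w) (hwv : w ≤ v - L) :
    |β - α| * L ≤ β * w + σ - (α * w + ρ) := by
  rcases abs_cases (β - α) with ⟨h, hpos⟩ | ⟨h, hneg⟩ <;> rw [h] <;> nlinarith

section Separated

variable {t : ℕ} {a : Fin t → ℝ} {δ : ℝ}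

theorem Fin.mul_le_sub_of_separated (ha : Monotone a)
    (hsep : ∀ p q, p ≠ q → δ ≤ |a p - a q|) :
    ∀ (k : ℕ) (i j : Fin t), (i : ℕ) + k = j → k * δ ≤ a j - a i
  | 0, i, j, h => by simp [Fin.ext h]
  | k + 1, i, j, h => by
    let m : Fin t := ⟨i + k, by omega⟩
    have hmj : m < j := Fin.lt_def.2 (by simp [m]; omega)
    have hm := Fin.mul_le_sub_of_separated ha hsep k i m rfl
    have hstep := hsep j m hmj.ne'
    rw [abs_of_nonneg (sub_nonneg.2 (ha hmj.le))] at hstep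
    push_cast
    linarith

theorem Fin.dist_mul_le_abs_sub_of_separated (ha : Monotone a)
    (hsep : ∀ p q, p ≠ q → δ ≤ |a p - a q|) (i j : Fin t) :
    (Nat.dist i j : ℝ) * δ ≤ |a i - a j| := by
  wlog hij : i ≤ j generalizing i j
  · rw [Nat.dist_comm, abs_sub_comm]
    exact this j i (le_of_not_ge hij)
  rw [Nat.dist_eq_sub_of_le hij, abs_sub_comm, abs_of_nonneg (sub_nonneg.2 (ha hij))]
  exact Fin.mul_le_sub_of_separated ha hsep _ i j (by omega)

theorem Fin.add_dist_mul_log_three_le_of_separated (ha : Monotone a) (hδ : 0 < δ)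
    (hsep : ∀ p q, p ≠ q → δ ≤ |a p - a q|) {r : Fin t → ℝ} {j : Fin t} {w₁ w₂ w : ℝ}
    (hdom₁ : ∀ i, a i * w₁ + r i ≤ a j * w₁ + r j) (hdom₂ : ∀ i, a i * w₂ + r i ≤ a j * w₂ + r j)
    (hw₁ : w₁ + log 3 / δ ≤ w) (hw₂ : w ≤ w₂ - log 3 / δ) (i : Fin t) :
    a i * w + r i + Nat.dist i j * log 3 ≤ a j * w + r j := by
  have hgap := abs_sub_mul_le_sub_of_le_of_le (hdom₁ i) (hdom₂ i) hw₁ hw₂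
  rw [abs_sub_comm] at hgap
  have hdist := mul_le_mul_of_nonneg_right (Fin.dist_mul_le_abs_sub_of_separated ha hsep i j)
    (div_pos (log_pos (by norm_num : (1 : ℝ) < 3)) hδ).le
  have hlog : Nat.dist i j * δ * (log 3 / δ) = Nat.dist i j * log 3 := by field_simp
  linarith

end Separated

theorem sum_inv_three_pow_lt_half_of_injOn {ι : Type*} {s : Finset ι} {f : ι → ℕ}
    (hf : Set.InjOn f s) (hf0 : ∀ i ∈ s, f i ≠ 0) :
    ∑ i ∈ s, (3 : ℝ)⁻¹ ^ f i < 1 / 2 := by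
  classical
  rw [← sum_image hf]
  set N := (s.image f).sup id + 1
  have hsub : s.image f ⊆ Ico 1 N := fun k hk => by
    obtain ⟨i, hi, rfl⟩ := mem_image.1 hk
    exact mem_Ico.2 ⟨Nat.one_le_iff_ne_zero.2 (hf0 i hi), Nat.lt_succ_of_le (le_sup (f := id) hk)⟩
  have hN : 1 ≤ N := by omega
  calc ∑ k ∈ s.image f, (3 : ℝ)⁻¹ ^ k ≤ ∑ k ∈ Ico 1 N, (3 : ℝ)⁻¹ ^ k :=
        sum_le_sum_of_subset_of_nonneg hsub fun _ _ _ => by positivity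
    _ = (3⁻¹ ^ 1 - 3⁻¹ ^ N) / (1 - 3⁻¹) := geom_sum_Ico' (by norm_num) hN
    _ < 1 / 2 := by
      have : (0 : ℝ) < 3⁻¹ ^ N := by positivity
      rw [div_lt_iff₀ (by norm_num)]
      linarith

theorem Fin.sum_erase_inv_three_pow_dist_lt_one {t : ℕ} (j : Fin t) :
    ∑ i ∈ univ.erase j, (3 : ℝ)⁻¹ ^ Nat.dist i j < 1 := by
  have hsplit : univ.erase j = Iio j ∪ Ioi j := by
    ext i
    simp
  have hdisj : Disjoint (Iio j) (Ioi j) :=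
    disjoint_left.2 fun i hi hi' => (mem_Iio.1 hi).asymm (mem_Ioi.1 hi')
  rw [hsplit, sum_union hdisj]
  have hlow := sum_inv_three_pow_lt_half_of_injOn (s := Iio j) (f := fun i => Nat.dist i j)
    (fun i hi i' hi' h => by
      simp only [coe_Iio, Set.mem_Iio, Fin.lt_def] at hi hi' h
      unfold Nat.dist at h
      exact Fin.ext (by omega))
    (fun i hi h => by
      simp only [mem_Iio, Fin.lt_def] at hi
      unfold Nat.dist at h
      omega)
  have hhigh := sum_inv_three_pow_lt_half_of_injOn (s := Ioi j) (f := fun i => Nat.dist i j)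
    (fun i hi i' hi' h => by
      simp only [coe_Ioi, Set.mem_Ioi, Fin.lt_def] at hi hi' h
      unfold Nat.dist at h
      exact Fin.ext (by omega))
    (fun i hi h => by
      simp only [mem_Ioi, Fin.lt_def] at hi
      unfold Nat.dist at h
      omega)
  linarith

theorem norm_le_sum_erase_norm_of_sum_eq_zero {ι E : Type*} [Fintype ι] [DecidableEq ι]
    [SeminormedAddCommGroup E] {x : ι → E} (h : ∑ i, x i = 0) (j : ι) :
    ‖x j‖ ≤ ∑ i ∈ univ.erase j, ‖x i‖ := by
  rw [← add_sum_erase univ x (mem_univ j), add_eq_zero_iff_eq_neg] at h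
  rw [h, norm_neg]
  exact norm_sum_le _ _

theorem Real.exp_le_exp_mul_inv_three_pow {x y : ℝ} {n : ℕ} (h : x + n * log 3 ≤ y) :
    exp x ≤ exp y * 3⁻¹ ^ n :=
  calc exp x ≤ exp (y - n * log 3) := exp_le_exp.2 (by linarith)
    _ = exp y * 3⁻¹ ^ n := by
      rw [exp_sub, exp_nat_mul, exp_log (by norm_num), inv_pow, div_eq_mul_inv]

theorem no_root_in_gap_strip_general (t : ℕ) (a : Fin t → ℝ) (b : Fin t → ℂ)
    (ha : StrictMono a) (δ : ℝ)
    (hδ : IsLeast {d : ℝ | ∃ p q : Fin t, p ≠ q ∧ d = |a p - a q|} δ)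
    (w₁ w₂ : ℝ) (hlt : w₁ < w₂)
    (hcons : ∀ w ∈ Trop t a b, ¬ (w₁ < w ∧ w < w₂))
    (z : ℂ) (hz : ∑ j, Complex.exp (a j * z + b j) = 0) :
    ¬ (w₁ + Real.log 3 / δ ≤ z.re ∧ z.re ≤ w₂ - Real.log 3 / δ) := by
  rintro ⟨hw₁, hw₂⟩
  obtain ⟨p, q, hpq, hδpq⟩ := hδ.1
  have hδ_pos : 0 < δ := hδpq ▸ abs_pos.2 (sub_ne_zero.2 (ha.injective.ne hpq))
  have hL : 0 < log 3 / δ := div_pos (log_pos (by norm_num)) hδ_pos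
  have : Nonempty (Fin t) := ⟨p⟩
  obtain ⟨j, hj⟩ := Finite.exists_max fun i => a i * z.re + (b i).re
  have hdom : ∀ x ∈ Set.Icc w₁ w₂, ∀ i, a i * x + (b i).re ≤ a j * x + (b j).re := by
    rw [← closure_Ioo hlt.ne]
    exact isPreconnected_Ioo.forall_apply_le_of_mem_closure (f := fun i x => a i * x + (b i).re)
      (fun i => by fun_prop) (fun x hx i k hik hmax heq => hcons x ⟨i, k, hik, hmax, heq⟩ hx)
      ⟨by linarith, by linarith⟩ hj
  have hterm (i : Fin t) : ‖Complex.exp (a i * z + b i)‖ ≤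
      ‖Complex.exp (a j * z + b j)‖ * 3⁻¹ ^ Nat.dist i j := by
    simp only [Complex.norm_exp, Complex.add_re, Complex.re_ofReal_mul]
    exact exp_le_exp_mul_inv_three_pow <| Fin.add_dist_mul_log_three_le_of_separated ha.monotone
      hδ_pos (fun p q hpq => hδ.2 ⟨p, q, hpq, rfl⟩) (hdom w₁ ⟨le_rfl, hlt.le⟩)
      (hdom w₂ ⟨hlt.le, le_rfl⟩) hw₁ hw₂ i
  have hpos : 0 < ‖Complex.exp (a j * z + b j)‖ := norm_pos_iff.2 (Complex.exp_ne_zero _)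
  refine lt_irrefl ‖Complex.exp (a j * z + b j)‖ ?_
  calc ‖Complex.exp (a j * z + b j)‖
      ≤ ∑ i ∈ univ.erase j, ‖Complex.exp (a i * z + b i)‖ :=
        norm_le_sum_erase_norm_of_sum_eq_zero hz j
    _ ≤ ∑ i ∈ univ.erase j, ‖Complex.exp (a j * z + b j)‖ * 3⁻¹ ^ Nat.dist i j :=
        sum_le_sum fun i _ => hterm i
    _ < ‖Complex.exp (a j * z + b j)‖ := by
        rw [← mul_sum]
        exact mul_lt_of_lt_one_right hpos (Fin.sum_erase_inv_three_pow_dist_lt_one j)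

/-- a root-free vertical strip between two consecutive points of `Trop(g)`
that are at distance at least `2 log 3 / δ(g)` apart. -/
theorem no_root_in_gap_strip (t : ℕ) (a : Fin t → ℝ) (b : Fin t → ℂ)
    (ha : StrictMono a) (δ : ℝ)
    (hδ : IsLeast {d : ℝ | ∃ p q : Fin t, p ≠ q ∧ d = |a p - a q|} δ)
    (w₁ w₂ : ℝ) (h₁ : w₁ ∈ Trop t a b) (h₂ : w₂ ∈ Trop t a b) (hlt : w₁ < w₂)
    (hcons : ∀ w ∈ Trop t a b, ¬ (w₁ < w ∧ w < w₂))
    (hgap : 2 * Real.log 3 / δ ≤ w₂ - w₁)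
    (z : ℂ) (hz : ∑ j, Complex.exp (a j * z + b j) = 0) :
    ¬ (w₁ + Real.log 3 / δ ≤ z.re ∧ z.re ≤ w₂ - Real.log 3 / δ) :=
  no_root_in_gap_strip_general t a b ha δ hδ w₁ w₂ hlt hcons z hz
end
end

section
/- Let g(z) = Σ_{j=1}^t e^{a_j z + b_j} with real frequencies a_j, b_j ∈ ℂ, t ≥ 2, and δ(g) := min_{p≠q}|a_p − a_q|. Let W be the open (log 3/δ(g))-neighborhood of Trop(g) in ℝ. Then for every complex root ζ of g, Re(ζ) ∈ W. In particular, for every r ∈ Re(Z(g)) there exists w ∈ Trop(g) with |r − w| < log 3/δ(g). -/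
/-! Let `j` maximise `a k * r + Re b k` at `r = Re ζ`. Any line `i` with `a i ≠ a j` meets the upper
envelope of the lines at a tropical point no farther from `r` than where it crosses line `j`, so if
every tropical point is at distance `≥ ε` from `r`, line `i` lies below line `j` at `r` by at least
`|a i - a j| ε ≥ δ |i - j| ε`. For `ε = log 3 / δ` this gives
`|e^(a i ζ + b i)| ≤ 3^(-|i - j|) |e^(a j ζ + b j)|`, and since `2 ∑_{k ≥ 1} 3^(-k) = 1` the `j`-th
term strictly outweighs all the others together, so the sum cannot vanish. -/

noncomputable section

open Finset

theorem sum_range_one_third_pow_dist_lt_two (n j : ℕ) :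
    ∑ i ∈ range n, (1 / 3 : ℝ) ^ Nat.dist i j < 2 := by
  have hgeom (m : ℕ) : ∑ k ∈ range m, (1 / 3 : ℝ) ^ k < 3 / 2 := by
    rw [geom_sum_eq (by norm_num), div_lt_iff_of_neg (by norm_num)]
    have : 0 < (1 / 3 : ℝ) ^ m := by positivity
    linarith
  have hleft : ∑ i ∈ range (j + 1), (1 / 3 : ℝ) ^ Nat.dist i j
      = ∑ k ∈ range (j + 1), (1 / 3 : ℝ) ^ k := by
    refine (sum_range_reflect _ _).symm.trans (sum_congr rfl fun k hk => ?_)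
    rw [Nat.dist_eq_sub_of_le (by omega)]
    congr 1
    have := mem_range.1 hk
    omega
  have hright : ∑ i ∈ Ico (j + 1) (j + 1 + n), (1 / 3 : ℝ) ^ Nat.dist i j
      = 1 / 3 * ∑ k ∈ range n, (1 / 3 : ℝ) ^ k := by
    rw [sum_Ico_eq_sum_range, Nat.add_sub_cancel_left, mul_sum]
    refine sum_congr rfl fun k _ => ?_
    rw [Nat.dist_eq_sub_of_le_right (by omega), ← pow_succ']
    congr 1
    omega
  calc ∑ i ∈ range n, (1 / 3 : ℝ) ^ Nat.dist i j
      ≤ ∑ i ∈ range (j + 1 + n), (1 / 3 : ℝ) ^ Nat.dist i j :=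
        sum_le_sum_of_subset_of_nonneg (range_subset_range.2 (by omega))
          fun _ _ _ => by positivity
    _ = ∑ i ∈ range (j + 1), (1 / 3 : ℝ) ^ Nat.dist i j
          + ∑ i ∈ Ico (j + 1) (j + 1 + n), (1 / 3 : ℝ) ^ Nat.dist i j :=
        (sum_range_add_sum_Ico _ (by omega)).symm
    _ < 2 := by
        rw [hleft, hright]
        linarith [hgeom (j + 1), hgeom n]

theorem sum_erase_one_third_pow_dist_lt_one {t : ℕ} (j : Fin t) :
    ∑ i ∈ univ.erase j, (1 / 3 : ℝ) ^ Nat.dist i j < 1 := by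
  have h := sum_range_one_third_pow_dist_lt_two t j
  rw [← Fin.sum_univ_eq_sum_range (fun i => (1 / 3 : ℝ) ^ Nat.dist i j),
    ← add_sum_erase _ _ (mem_univ j), Nat.dist_self, pow_zero] at h
  linarith

theorem norm_le_sum_erase_of_sum_eq_zero {ι E : Type*} [DecidableEq ι] [NormedAddCommGroup E]
    {s : Finset ι} {z : ι → E} (hz : ∑ i ∈ s, z i = 0) {j : ι} (hj : j ∈ s) :
    ‖z j‖ ≤ ∑ i ∈ s.erase j, ‖z i‖ := by
  rw [← add_sum_erase s z hj, add_eq_zero_iff_eq_neg] at hz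
  rw [hz, norm_neg]
  exact norm_sum_le _ _

theorem sum_ne_zero_of_norm_le_third_pow_dist {t : ℕ} {E : Type*} [NormedAddCommGroup E]
    {z : Fin t → E} {j : Fin t} (hj : z j ≠ 0)
    (hz : ∀ i ≠ j, ‖z i‖ ≤ ‖z j‖ * (1 / 3) ^ Nat.dist i j) :
    ∑ i, z i ≠ 0 := by
  intro hsum
  have hle := norm_le_sum_erase_of_sum_eq_zero hsum (mem_univ j)
  have hlt : ∑ i ∈ univ.erase j, ‖z i‖ < ‖z j‖ :=
    calc ∑ i ∈ univ.erase j, ‖z i‖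
        ≤ ∑ i ∈ univ.erase j, ‖z j‖ * (1 / 3) ^ Nat.dist i j :=
          sum_le_sum fun i hi => hz i (ne_of_mem_erase hi)
      _ = ‖z j‖ * ∑ i ∈ univ.erase j, (1 / 3 : ℝ) ^ Nat.dist i j := (mul_sum _ _ _).symm
      _ < ‖z j‖ * 1 :=
          mul_lt_mul_of_pos_left (sum_erase_one_third_pow_dist_lt_one j) (norm_pos_iff.2 hj)
      _ = ‖z j‖ := mul_one _
  linarith

theorem mul_dist_le_abs_sub {t : ℕ} {a : Fin t → ℝ} (ha : Monotone a) {δ : ℝ}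
    (hδ : ∀ p q, p ≠ q → δ ≤ |a p - a q|) (i j : Fin t) :
    δ * Nat.dist i j ≤ |a i - a j| := by
  have key : ∀ (n : ℕ) (p q : Fin t), (q : ℕ) = p + n → δ * n ≤ a q - a p := by
    intro n
    induction n with
    | zero => intro p q h; simp [Fin.ext h]
    | succ n ih =>
      intro p q h
      let q' : Fin t := ⟨p + n, by omega⟩
      have hq' : q' < q := Fin.lt_def.2 (by simp [q']; omega)
      have hstep : δ ≤ a q - a q' := by
        simpa [abs_of_nonneg (sub_nonneg.2 (ha hq'.le))] using hδ q q' hq'.ne'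
      push_cast
      linarith [ih p q' rfl]
  rcases le_total (i : ℕ) j with h | h
  · rw [Nat.dist_eq_sub_of_le h, abs_sub_comm]
    exact (key _ i j (by omega)).trans (le_abs_self _)
  · rw [Nat.dist_eq_sub_of_le_right h]
    exact (key _ j i (by omega)).trans (le_abs_self _)

theorem mem_trop_neg_iff {t : ℕ} {a : Fin t → ℝ} {b : Fin t → ℂ} {w : ℝ} :
    w ∈ Trop t (-a) b ↔ -w ∈ Trop t a b := by
  simp [Trop, neg_mul, mul_neg]

theorem exists_mem_trop_of_slope_lt {t : ℕ} {a : Fin t → ℝ} {b : Fin t → ℂ} {r : ℝ}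
    {i j : Fin t} (hj : ∀ k, a k * r + (b k).re ≤ a j * r + (b j).re) (hij : a j < a i) :
    ∃ w ∈ Trop t a b, r ≤ w ∧
      (w - r) * (a i - a j) ≤ a j * r + (b j).re - (a i * r + (b i).re) := by
  -- `r + ρ k` is where line `k` crosses line `j`; the first crossing to the right of `r` is tropical.
  set ρ : Fin t → ℝ := fun k => (a j * r + (b j).re - (a k * r + (b k).re)) / (a k - a j)
  have hρ : ∀ m, a j < a m → ρ m * (a m - a j) = a j * r + (b j).re - (a m * r + (b m).re) :=
    fun m hm => div_mul_cancel₀ _ (sub_pos.2 hm).ne'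
  obtain ⟨k, hk, hmin⟩ := (univ.filter fun k => a j < a k).exists_min_image ρ ⟨i, by simpa⟩
  simp only [mem_filter, mem_univ, true_and] at hk hmin
  have hρk : 0 ≤ ρ k := div_nonneg (sub_nonneg.2 (hj k)) (sub_pos.2 hk).le
  have hρk_eq := hρ k hk
  refine ⟨r + ρ k, ⟨j, k, ne_of_apply_ne a hk.ne, fun m => ?_, by linarith⟩, by linarith, ?_⟩
  · by_cases hm : a j < a m
    · have := mul_le_mul_of_nonneg_right (hmin m hm) (sub_pos.2 hm).le
      linarith [hρ m hm]
    · have := mul_le_mul_of_nonneg_right (not_lt.1 hm) hρk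
      linarith [hj m]
  · have := mul_le_mul_of_nonneg_right (hmin i hij) (sub_pos.2 hij).le
    linarith [hρ i hij]

theorem exists_mem_trop_abs_sub_mul_le {t : ℕ} {a : Fin t → ℝ} {b : Fin t → ℂ} {r : ℝ}
    {i j : Fin t} (hj : ∀ k, a k * r + (b k).re ≤ a j * r + (b j).re) (hij : a i ≠ a j) :
    ∃ w ∈ Trop t a b, |a i - a j| * |r - w| ≤ a j * r + (b j).re - (a i * r + (b i).re) := by
  rcases hij.lt_or_gt with hlt | hgt
  · obtain ⟨w, hw, hrw, hle⟩ := exists_mem_trop_of_slope_lt (a := -a) (b := b) (r := -r)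
      (i := i) (j := j) (by simpa using hj) (by simpa using hlt)
    refine ⟨-w, mem_trop_neg_iff.1 hw, ?_⟩
    rw [abs_of_neg (sub_neg.2 hlt), abs_of_nonneg (by linarith)]
    simp only [Pi.neg_apply] at hle
    linarith
  · obtain ⟨w, hw, hrw, hle⟩ := exists_mem_trop_of_slope_lt hj hgt
    refine ⟨w, hw, ?_⟩
    rw [abs_of_pos (sub_pos.2 hgt), abs_of_nonpos (by linarith)]
    linarith

theorem re_root_near_trop_general (t : ℕ) (a : Fin t → ℝ) (b : Fin t → ℂ)
    (ha : StrictMono a) (δ : ℝ)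
    (hδ : IsLeast {d : ℝ | ∃ p q : Fin t, p ≠ q ∧ d = |a p - a q|} δ)
    (ζ : ℂ) (hζ : ∑ j, Complex.exp (a j * ζ + b j) = 0) :
    ∃ w ∈ Trop t a b, |ζ.re - w| < Real.log 3 / δ := by
  obtain ⟨⟨p, q, hpq, rfl⟩, hδ_le⟩ := hδ
  have hδ_pos : 0 < |a p - a q| := abs_pos.2 (sub_ne_zero.2 (ha.injective.ne hpq))
  by_contra! hfar
  obtain ⟨j, -, hj⟩ := univ.exists_max_image (fun k => a k * ζ.re + (b k).re) ⟨p, mem_univ p⟩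
  have hnorm : ∀ k, ‖Complex.exp (a k * ζ + b k)‖ = Real.exp (a k * ζ.re + (b k).re) := by
    simp [Complex.norm_exp]
  refine sum_ne_zero_of_norm_le_third_pow_dist (z := fun k => Complex.exp (a k * ζ + b k))
    (Complex.exp_ne_zero (a j * ζ + b j)) (fun i hij => ?_) hζ
  obtain ⟨w, hw, hwr⟩ := exists_mem_trop_abs_sub_mul_le (fun k => hj k (mem_univ k))
    (ha.injective.ne hij)
  have hgap : Nat.dist i j * Real.log 3
      ≤ a j * ζ.re + (b j).re - (a i * ζ.re + (b i).re) :=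
    calc Nat.dist i j * Real.log 3
        = |a p - a q| * Nat.dist i j * (Real.log 3 / |a p - a q|) := by field_simp
      _ ≤ |a i - a j| * |ζ.re - w| := by
          gcongr
          · exact mul_dist_le_abs_sub ha.monotone (fun p q h => hδ_le ⟨p, q, h, rfl⟩) i j
          · exact hfar w hw
      _ ≤ _ := hwr
  rw [hnorm, hnorm, ← Real.exp_log (by norm_num : (0 : ℝ) < 1 / 3), ← Real.exp_nat_mul,
    ← Real.exp_add, Real.exp_le_exp, Real.log_div one_ne_zero three_ne_zero, Real.log_one]
  linarith

/-- the real part of every complex root of `g` lies in the open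
`log 3 / δ(g)`-neighborhood of `Trop(g)`. -/
theorem re_root_near_trop (t : ℕ) (ht : 2 ≤ t) (a : Fin t → ℝ) (b : Fin t → ℂ)
    (ha : StrictMono a) (δ : ℝ)
    (hδ : IsLeast {d : ℝ | ∃ p q : Fin t, p ≠ q ∧ d = |a p - a q|} δ)
    (ζ : ℂ) (hζ : ∑ j, Complex.exp (a j * ζ + b j) = 0) :
    ∃ w ∈ Trop t a b, |ζ.re - w| < Real.log 3 / δ :=
  re_root_near_trop_general t a b ha δ hδ ζ hζ
end
end

section
/- Let I ⊂ ℂ be a compact line segment and let g, h be functions analytic on an open neighborhood of I with |h(z)| < |g(z)| for all z ∈ I. Then |Im(∫_I (g'+h')/(g+h) dz − ∫_I g'/g dz)| < π, where the integrals are complex line integrals along I. -/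
/-!
On the segment, `(g + h) / g` takes values in the right half-plane, so `log ((g + h) / g)` is a
holomorphic primitive of `(g' + h') / (g + h) - g' / g` there. The difference of the two integrals
is therefore `log ((g + h) / g)` evaluated between the endpoints, and its imaginary part is a
difference of two arguments in `(-π/2, π/2)`.
-/

noncomputable section

open Complex Set MeasureTheory intervalIntegral AffineMap

section Segment

variable {𝕜 : Type*} [RCLike 𝕜] {p q : 𝕜}

theorem ContinuousOn.intervalIntegrable_comp_segment {φ : 𝕜 → 𝕜}
    (hφ : ContinuousOn φ (segment ℝ p q)) :
    IntervalIntegrable (fun s : ℝ => φ ((1 - s) • p + s • q) * (q - p)) volume 0 1 := by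
  refine ContinuousOn.intervalIntegrable
    (.mul (hφ.comp (by fun_prop) fun s hs => ?_) continuousOn_const)
  rw [uIcc_of_le zero_le_one] at hs
  simpa only [lineMap_apply_module] using lineMap_mem_segment ℝ p q hs

theorem integral_comp_segment_eq_sub {F F' : 𝕜 → 𝕜}
    (hF : ∀ z ∈ segment ℝ p q, HasDerivAt F (F' z) z)
    (hF' : ContinuousOn F' (segment ℝ p q)) :
    ∫ s in (0 : ℝ)..1, F' ((1 - s) • p + s • q) * (q - p) = F q - F p := by
  have hderiv : ∀ s ∈ uIcc (0 : ℝ) 1,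
      HasDerivAt (fun s : ℝ => F (lineMap p q s)) (F' (lineMap p q s) * (q - p)) s := by
    intro s hs
    rw [uIcc_of_le zero_le_one] at hs
    exact (hF _ (lineMap_mem_segment ℝ p q hs)).comp s hasDerivAt_lineMap
  have := integral_eq_sub_of_hasDerivAt hderiv
    (by simpa only [lineMap_apply_module] using hF'.intervalIntegrable_comp_segment)
  simpa only [lineMap_apply_module, sub_zero, sub_self, zero_smul, one_smul, zero_add, add_zero]
    using this

end Segment

theorem continuousOn_deriv_div_of_hasDerivAt {f f' : ℂ → ℂ} {U s : Set ℂ} (hU : IsOpen U)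
    (hsU : s ⊆ U) (hf : ∀ z ∈ U, HasDerivAt f (f' z) z) (hf0 : ∀ z ∈ s, f z ≠ 0) :
    ContinuousOn (fun z => f' z / f z) s := by
  have hdiff : DifferentiableOn ℂ f U := fun z hz =>
    (hf z hz).differentiableAt.differentiableWithinAt
  -- `f' = deriv f` on `U`, and the derivative of a holomorphic function is holomorphic.
  have hf' : ContinuousOn f' U :=
    (hdiff.analyticOnNhd hU).deriv.continuousOn.congr fun z hz => (hf z hz).deriv.symm
  exact (hf'.mono hsU).div (hdiff.continuousOn.mono hsU) hf0

theorem re_add_div_pos_of_norm_lt {z w : ℂ} (h : ‖w‖ < ‖z‖) : 0 < ((z + w) / z).re := by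
  have hz : z ≠ 0 := norm_pos_iff.mp ((norm_nonneg w).trans_lt h)
  have hwz : ‖w / z‖ < 1 := by rwa [norm_div, div_lt_one (norm_pos_iff.mpr hz)]
  rw [add_div, div_self hz, add_re, one_re]
  linarith [neg_abs_le (w / z).re, abs_re_le_norm (w / z)]

theorem add_div_ne_zero_of_norm_lt {z w : ℂ} (h : ‖w‖ < ‖z‖) : (z + w) / z ≠ 0 :=
  fun h0 => by simpa [h0] using re_add_div_pos_of_norm_lt h

theorem hasDerivAt_log_add_div_of_norm_lt {g h : ℂ → ℂ} {g' h' z : ℂ}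
    (hg : HasDerivAt g g' z) (hh : HasDerivAt h h' z) (hlt : ‖h z‖ < ‖g z‖) :
    HasDerivAt (fun w => log ((g w + h w) / g w))
      ((g' + h') / (g z + h z) - g' / g z) z := by
  obtain ⟨hgh0, hg0⟩ := div_ne_zero_iff.mp (add_div_ne_zero_of_norm_lt hlt)
  convert ((hg.fun_add hh).fun_div hg hg0).clog
    (mem_slitPlane_iff.mpr (.inl (re_add_div_pos_of_norm_lt hlt))) using 1
  field_simp

theorem abs_im_log_sub_log_lt_pi {a b : ℂ} (ha : 0 < a.re) (hb : 0 < b.re) :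
    |(log a - log b).im| < Real.pi := by
  have ha' := abs_arg_lt_pi_div_two_iff.mpr (.inl ha)
  have hb' := abs_arg_lt_pi_div_two_iff.mpr (.inl hb)
  rw [sub_im, log_im, log_im]
  linarith [abs_sub (arg a) (arg b)]

theorem im_log_deriv_integral_diff_lt_pi_general (p q : ℂ)
    (U : Set ℂ) (hU : IsOpen U) (hseg : segment ℝ p q ⊆ U)
    (g g' h h' : ℂ → ℂ)
    (hg : ∀ z ∈ U, HasDerivAt g (g' z) z)
    (hh : ∀ z ∈ U, HasDerivAt h (h' z) z)
    (hlt : ∀ z ∈ segment ℝ p q, ‖h z‖ < ‖g z‖) :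
    |((∫ s in (0:ℝ)..1,
        ((g' ((1 - s) • p + s • q) + h' ((1 - s) • p + s • q)) /
          (g ((1 - s) • p + s • q) + h ((1 - s) • p + s • q))) * (q - p)) -
      (∫ s in (0:ℝ)..1,
        (g' ((1 - s) • p + s • q) / g ((1 - s) • p + s • q)) * (q - p))).im|
      < Real.pi := by
  have hne z (hz : z ∈ segment ℝ p q) :=
    div_ne_zero_iff.mp (add_div_ne_zero_of_norm_lt (hlt z hz))
  have hA : ContinuousOn (fun z => (g' z + h' z) / (g z + h z)) (segment ℝ p q) :=
    continuousOn_deriv_div_of_hasDerivAt hU hseg (fun z hz => (hg z hz).add (hh z hz))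
      fun z hz => (hne z hz).1
  have hB : ContinuousOn (fun z => g' z / g z) (segment ℝ p q) :=
    continuousOn_deriv_div_of_hasDerivAt hU hseg hg fun z hz => (hne z hz).2
  rw [← integral_sub hA.intervalIntegrable_comp_segment hB.intervalIntegrable_comp_segment]
  simp_rw [← sub_mul]
  rw [integral_comp_segment_eq_sub (fun z hz => hasDerivAt_log_add_div_of_norm_lt
    (hg z (hseg hz)) (hh z (hseg hz)) (hlt z hz)) (hA.sub hB)]
  exact abs_im_log_sub_log_lt_pi (re_add_div_pos_of_norm_lt (hlt q (right_mem_segment ℝ p q)))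
    (re_add_div_pos_of_norm_lt (hlt p (left_mem_segment ℝ p q)))

/-- if `|h| < |g|` on a compact segment `I` from `p` to `q`, the imaginary
parts of the logarithmic-derivative integrals of `g + h` and `g` along `I` differ by
less than `π`.  The line integrals are written via the parametrization
`s ↦ (1-s)•p + s•q`, `dz = (q-p) ds`. -/
theorem im_log_deriv_integral_diff_lt_pi (p q : ℂ) (hpq : p ≠ q)
    (U : Set ℂ) (hU : IsOpen U) (hseg : segment ℝ p q ⊆ U)
    (g g' h h' : ℂ → ℂ)
    (hg : ∀ z ∈ U, HasDerivAt g (g' z) z)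
    (hh : ∀ z ∈ U, HasDerivAt h (h' z) z)
    (hlt : ∀ z ∈ segment ℝ p q, ‖h z‖ < ‖g z‖) :
    |((∫ s in (0:ℝ)..1,
        ((g' ((1 - s) • p + s • q) + h' ((1 - s) • p + s • q)) /
          (g ((1 - s) • p + s • q) + h ((1 - s) • p + s • q))) * (q - p)) -
      (∫ s in (0:ℝ)..1,
        (g' ((1 - s) • p + s • q) / g ((1 - s) • p + s • q)) * (q - p))).im|
      < Real.pi :=
  im_log_deriv_integral_diff_lt_pi_general p q U hU hseg g g' h h' hg hh hlt
end
end

section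
/- Let g(z) = Σ_{j=1}^t e^{a_j · z + b_j} be an n-variate exponential t-sum with a_j ∈ ℝⁿ, b_j ∈ ℂ, t ≥ 2, and δ(g) := min_{p≠q}|a_p − a_q| > 0 (Euclidean norm). Then for every z ∈ ℂⁿ with g(z) = 0, there exists w ∈ Trop(g) with |Re(z) − w| ≤ log(t−1)/δ(g). -/
noncomputable section

/-- Complex dot product `a · z = Σ aᵢ zᵢ` of a real frequency with `z ∈ ℂⁿ`. -/
def dotC {n : ℕ} (a : Fin n → ℝ) (z : Fin n → ℂ) : ℂ := ∑ i, (a i : ℂ) * z i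

/-- Real dot product. -/
def dotR {n : ℕ} (a w : Fin n → ℝ) : ℝ := ∑ i, a i * w i

/-- The Archimedean tropical variety of an `n`-variate exponential sum. -/
def TropN (n t : ℕ) (a : Fin t → EuclideanSpace ℝ (Fin n)) (b : Fin t → ℂ) :
    Set (EuclideanSpace ℝ (Fin n)) :=
  {w | ∃ j k : Fin t, j ≠ k ∧
    (∀ i : Fin t, dotR (a i) w + (b i).re ≤ dotR (a j) w + (b j).re) ∧
    dotR (a j) w + (b j).re = dotR (a k) w + (b k).re}

/-- The vector of real parts of `z ∈ ℂⁿ`, as a point of Euclidean space. -/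
def rePart {n : ℕ} (z : Fin n → ℂ) : EuclideanSpace ℝ (Fin n) := WithLp.toLp 2 (fun i => (z i).re)

/-! Let `x = Re z`, let `j` index a largest of the affine functions `Fᵢ = aᵢ · x + Re bᵢ` and `k`
a largest among the others. Since `g(z) = 0`, the dominant term `e^{F_j}` is at most the sum of
the other `t - 1` terms, so `F_j - F_k ≤ log (t - 1)`. Moving from `x` along `a_k - a_j` closes this
gap at speed `|a_k - a_j| ≥ δ`; by the intermediate value theorem, before (or when) it closes, `j`
becomes tied with another maximal index, which is a point of `Trop(g)`. -/

open Finset RealInnerProductSpace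

theorem norm_le_sum_norm_erase_of_sum_eq_zero {ι E : Type*} [Fintype ι] [DecidableEq ι]
    [SeminormedAddCommGroup E] {v : ι → E} (hv : ∑ i, v i = 0) (j : ι) :
    ‖v j‖ ≤ ∑ i ∈ univ.erase j, ‖v i‖ := by
  have hvj : v j = -∑ i ∈ univ.erase j, v i :=
    eq_neg_of_add_eq_zero_left ((add_sum_erase univ v (mem_univ j)).trans hv)
  rw [hvj, norm_neg]
  exact norm_sum_le _ _

theorem sub_le_log_card_of_exp_le_sum {ι : Type*} {s : Finset ι} {r : ι → ℝ} {M m : ℝ}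
    (hM : Real.exp M ≤ ∑ i ∈ s, Real.exp (r i)) (hm : ∀ i ∈ s, r i ≤ m) :
    M - m ≤ Real.log #s := by
  have hsum : ∑ i ∈ s, Real.exp (r i) ≤ #s * Real.exp m := by
    simpa using sum_le_card_nsmul s _ _ fun i hi => Real.exp_le_exp.mpr (hm i hi)
  have hcard : (0 : ℝ) < #s := by
    by_contra! h
    have := (hM.trans hsum).trans (mul_nonpos_of_nonpos_of_nonneg h (Real.exp_pos m).le)
    linarith [Real.exp_pos M]
  rw [← Real.exp_le_exp, Real.exp_sub, Real.exp_log hcard, div_le_iff₀ (Real.exp_pos m)]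
  exact hM.trans hsum

theorem exists_mem_Icc_max_tie {ι : Type*} [Fintype ι] [DecidableEq ι] {f : ι → ℝ → ℝ}
    (hf : ∀ i, Continuous (f i)) {j k : ι} (hkj : k ≠ j) {s₀ : ℝ} (hs₀ : 0 ≤ s₀)
    (h0 : ∀ i, f i 0 ≤ f j 0) (hs₀k : f j s₀ ≤ f k s₀) :
    ∃ s ∈ Set.Icc 0 s₀, (∀ i, f i s ≤ f j s) ∧ ∃ i ≠ j, f i s = f j s := by
  have hne : (univ.erase j).Nonempty := ⟨k, mem_erase.mpr ⟨hkj, mem_univ k⟩⟩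
  set φ : ℝ → ℝ := fun s => (univ.erase j).sup' hne fun i => f i s - f j s
  have hφ : Continuous φ :=
    Continuous.finset_sup'_apply hne fun i _ => (hf i).sub (hf j)
  have hφ0 : φ 0 ≤ 0 := sup'_le hne _ fun i _ => sub_nonpos.mpr (h0 i)
  have hφs₀ : 0 ≤ φ s₀ :=
    (sub_nonneg.mpr hs₀k).trans
      (le_sup' (fun i => f i s₀ - f j s₀) (mem_erase.mpr ⟨hkj, mem_univ k⟩))
  obtain ⟨s, hs, hφs⟩ := intermediate_value_Icc hs₀ hφ.continuousOn ⟨hφ0, hφs₀⟩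
  obtain ⟨i, hi, hφi⟩ := exists_mem_eq_sup' hne fun i => f i s - f j s
  refine ⟨s, hs, fun i' => ?_, i, ne_of_mem_erase hi, ?_⟩
  · by_cases hi' : i' = j
    · rw [hi']
    · have := le_sup' (fun i => f i s - f j s) (mem_erase.mpr ⟨hi', mem_univ i'⟩)
      linarith
  · have : φ s = f i s - f j s := hφi
    linarith

section InnerProductSpace

variable {E : Type*} [NormedAddCommGroup E] [InnerProductSpace ℝ E]

theorem exists_tie_dist_le_gap_div_norm {ι : Type*} [Fintype ι] [DecidableEq ι] (a : ι → E)
    (c : ι → ℝ) (x : E) {j k : ι} (hkj : k ≠ j) (hak : a k ≠ a j)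
    (hj : ∀ i, ⟪a i, x⟫ + c i ≤ ⟪a j, x⟫ + c j) :
    ∃ w, (∀ i, ⟪a i, w⟫ + c i ≤ ⟪a j, w⟫ + c j) ∧ (∃ i ≠ j, ⟪a i, w⟫ + c i = ⟪a j, w⟫ + c j) ∧
      ‖x - w‖ ≤ (⟪a j, x⟫ + c j - (⟪a k, x⟫ + c k)) / ‖a k - a j‖ := by
  set v := a k - a j
  have hv : 0 < ‖v‖ := norm_pos_iff.mpr (sub_ne_zero.mpr hak)
  set gap := ⟪a j, x⟫ + c j - (⟪a k, x⟫ + c k) with hgap_def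
  have hgap : 0 ≤ gap := sub_nonneg.mpr (hj k)
  -- along `x + s • v` the gap shrinks at rate `‖v‖ ^ 2`, so it closes at `s₀`
  set s₀ := gap / ‖v‖ ^ 2
  have hline : ∀ i (s : ℝ), ⟪a i, x + s • v⟫ + c i = ⟪a i, x⟫ + c i + s * ⟪a i, v⟫ := by
    intro i s
    rw [inner_add_right, real_inner_smul_right]
    ring
  obtain ⟨s, ⟨hs0, hss₀⟩, hmax, htie⟩ :=
    exists_mem_Icc_max_tie (f := fun i s => ⟪a i, x + s • v⟫ + c i) (s₀ := s₀) (by fun_prop) hkj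
      (by positivity) (by simpa using hj) (by
        have hrise : s₀ * (⟪a k, v⟫ - ⟪a j, v⟫) = gap := by
          rw [← inner_sub_left, real_inner_self_eq_norm_sq]
          exact div_mul_cancel₀ _ (by positivity)
        simp only [hline]
        linarith)
  refine ⟨x + s • v, hmax, htie, ?_⟩
  calc ‖x - (x + s • v)‖ = s * ‖v‖ := by
        rw [sub_add_cancel_left, norm_neg, norm_smul, Real.norm_of_nonneg hs0]
    _ ≤ s₀ * ‖v‖ := by gcongr
    _ = gap / ‖v‖ := by simp only [s₀]; field_simp

end InnerProductSpace

theorem dotR_eq_inner {n : ℕ} (v w : EuclideanSpace ℝ (Fin n)) : dotR v w = ⟪v, w⟫ := by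
  simp [dotR, PiLp.inner_apply, mul_comm]

theorem re_dotC_add {n : ℕ} (a : EuclideanSpace ℝ (Fin n)) (z : Fin n → ℂ) (b : ℂ) :
    (dotC a z + b).re = ⟪a, rePart z⟫ + b.re := by
  simp [dotC, rePart, Complex.re_sum, PiLp.inner_apply, mul_comm]

theorem re_zero_near_trop_general (n t : ℕ) (ht : 2 ≤ t)
    (a : Fin t → EuclideanSpace ℝ (Fin n))
    (b : Fin t → ℂ) (δ : ℝ) (hδpos : 0 < δ)
    (hδ : IsLeast {d : ℝ | ∃ p q : Fin t, p ≠ q ∧ d = ‖a p - a q‖} δ)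
    (z : Fin n → ℂ) (hz : ∑ j, Complex.exp (dotC (a j) z + b j) = 0) :
    ∃ w ∈ TropN n t a b,
      ‖rePart z - w‖
        ≤ Real.log ((t : ℝ) - 1) / δ := by
  set x := rePart z
  set F : Fin t → ℝ := fun i => ⟪a i, x⟫ + (b i).re
  obtain ⟨j, -, hj⟩ := exists_max_image univ F ⟨⟨0, by omega⟩, mem_univ _⟩
  have hcard : #(univ.erase j) = t - 1 := by
    rw [card_erase_of_mem (mem_univ j), card_univ, Fintype.card_fin]
  obtain ⟨k, hk, hkmax⟩ := exists_max_image (univ.erase j) F (card_pos.mp (by omega))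
  have hgap : F j - F k ≤ Real.log ((t : ℝ) - 1) := by
    have hdom := norm_le_sum_norm_erase_of_sum_eq_zero hz j
    simp only [Complex.norm_exp, re_dotC_add] at hdom
    simpa [hcard, Nat.cast_sub (by omega : 1 ≤ t)] using sub_le_log_card_of_exp_le_sum hdom hkmax
  have hkj : k ≠ j := ne_of_mem_erase hk
  have hδD : δ ≤ ‖a k - a j‖ := hδ.2 ⟨k, j, hkj, rfl⟩
  have hak : a k ≠ a j := by
    intro h
    rw [h, sub_self, norm_zero] at hδD
    linarith
  obtain ⟨w, hmax, ⟨i, hij, htie⟩, hxw⟩ :=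
    exists_tie_dist_le_gap_div_norm a (fun i => (b i).re) x hkj hak fun i => hj i (mem_univ i)
  have hlog : 0 ≤ Real.log ((t : ℝ) - 1) :=
    Real.log_nonneg (by linarith [show (2 : ℝ) ≤ t by exact_mod_cast ht])
  refine ⟨w, ⟨j, i, hij.symm, ?_, ?_⟩, hxw.trans (div_le_div₀ hlog hgap hδpos hδD)⟩
  · simpa only [dotR_eq_inner] using hmax
  · simpa only [dotR_eq_inner] using htie.symm

/-- every point of `Re(Z(g))` is within distance `log(t-1)/δ(g)`
of some point of `Trop(g)`. -/
theorem re_zero_near_trop (n t : ℕ) (ht : 2 ≤ t)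
    (a : Fin t → EuclideanSpace ℝ (Fin n)) (ha : Function.Injective a)
    (b : Fin t → ℂ) (δ : ℝ) (hδpos : 0 < δ)
    (hδ : IsLeast {d : ℝ | ∃ p q : Fin t, p ≠ q ∧ d = ‖a p - a q‖} δ)
    (z : Fin n → ℂ) (hz : ∑ j, Complex.exp (dotC (a j) z + b j) = 0) :
    ∃ w ∈ TropN n t a b,
      ‖rePart z - w‖
        ≤ Real.log ((t : ℝ) - 1) / δ :=
  re_zero_near_trop_general n t ht a b δ hδpos hδ z hz
end
end

section
/- Let N ≥ 2, γ > 0, and let x_1, ..., x_N ∈ ℝⁿ satisfy |x_i − x_j| ≥ γ for all i ≠ j. Then there exists a unit vector θ ∈ ℝⁿ such that |x_i·θ − x_j·θ| ≥ γ/(√(e·n)·N²) for all i ≠ j. -/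
/-!
Fix a pair `i ≠ j` and put `v = xᵢ - xⱼ`. Among the points `θ` of the unit ball of `ℝⁿ`, those
with `|v·θ| < s|v|` lie in a slab of width `2s`, so their volume is at most `2s` times the
volume of the unit ball of `ℝⁿ⁻¹`. The unit ball of `ℝⁿ` contains the cylinder
`[-a, a] × B(0, √(1 - a²))` of `ℝ × ℝⁿ⁻¹`; with `a = 1/√n` and `(1 - 1/n)^(n-1) ≥ 1/e` its volume
is at least `2/√(en)` times that of the unit ball of `ℝⁿ⁻¹`. For `s = 1/(√(en) N²)` the fewer than
`N²` bad slabs therefore cannot cover the ball, and any uncovered `θ ≠ 0`, normalised, works.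
-/

open MeasureTheory Metric Set

theorem Real.exp_neg_one_le_div_succ_pow (m : ℕ) : Real.exp (-1) ≤ ((m : ℝ) / (m + 1)) ^ m := by
  rcases eq_or_ne m 0 with rfl | hm
  · simp [Real.exp_le_one_iff]
  calc Real.exp (-1) = (Real.exp 1)⁻¹ := Real.exp_neg 1
    _ ≤ ((1 + (m : ℝ)⁻¹) ^ m)⁻¹ := inv_anti₀ (by positivity) Real.one_add_inv_pow_le_exp
    _ = ((m : ℝ) / (m + 1)) ^ m := by
        rw [← inv_pow]
        congr 1
        field_simp

namespace EuclideanSpace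

/-- `θ ↦ (θ 0, (θ 1, …, θ m))`. -/
def headTailEquiv (m : ℕ) : EuclideanSpace ℝ (Fin (m + 1)) ≃ᵐ ℝ × EuclideanSpace ℝ (Fin m) :=
  (MeasurableEquiv.toLp 2 _).symm.trans <|
    (MeasurableEquiv.piFinSuccAbove (fun _ => ℝ) 0).trans <|
      MeasurableEquiv.prodCongr (MeasurableEquiv.refl ℝ) (MeasurableEquiv.toLp 2 _)

theorem norm_sq_eq_headTailEquiv {m : ℕ} (θ : EuclideanSpace ℝ (Fin (m + 1))) :
    ‖θ‖ ^ 2 = (headTailEquiv m θ).1 ^ 2 + ‖(headTailEquiv m θ).2‖ ^ 2 := by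
  simp only [norm_sq_eq, Real.norm_eq_abs, sq_abs, Fin.sum_univ_succ, headTailEquiv,
    MeasurableEquiv.trans_apply, MeasurableEquiv.toLp_symm_apply,
    MeasurableEquiv.piFinSuccAbove_apply, Fin.insertNthEquiv_zero, Fin.consEquiv_symm_apply]
  rfl

theorem measurePreserving_headTailEquiv (m : ℕ) : MeasurePreserving (headTailEquiv m) := by
  rw [Measure.volume_eq_prod]
  exact (EuclideanSpace.volume_preserving_symm_measurableEquiv_toLp _).trans
    ((volume_preserving_piFinSuccAbove (fun _ => ℝ) 0).trans
      ((MeasurePreserving.id volume).prod (PiLp.volume_preserving_toLp _)))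

theorem volume_preimage_headTailEquiv_prod (m : ℕ) (s : Set ℝ)
    (t : Set (EuclideanSpace ℝ (Fin m))) :
    volume (headTailEquiv m ⁻¹' s ×ˢ t) = volume s * volume t := by
  rw [(measurePreserving_headTailEquiv m).measure_preimage_equiv, Measure.volume_eq_prod,
    Measure.prod_prod]

theorem volume_closedBall_inter_abs_lt_le (m : ℕ) (s : ℝ) :
    volume (closedBall (0 : EuclideanSpace ℝ (Fin (m + 1))) 1 ∩ {θ | |θ 0| < s})
      ≤ ENNReal.ofReal (2 * s) * volume (closedBall (0 : EuclideanSpace ℝ (Fin m)) 1) := by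
  calc _ ≤ volume (headTailEquiv m ⁻¹' Ioo (-s) s ×ˢ closedBall 0 1) := by
        refine measure_mono fun θ ⟨hθ, hs⟩ => ⟨abs_lt.1 hs, ?_⟩
        rw [mem_closedBall_zero_iff] at hθ ⊢
        nlinarith [norm_sq_eq_headTailEquiv θ, norm_nonneg (headTailEquiv m θ).2, norm_nonneg θ]
    _ = _ := by
        rw [volume_preimage_headTailEquiv_prod, Real.volume_Ioo]
        ring_nf

/-- The unit ball contains the cylinder `[-a, a] × B(0, r)`. -/
theorem ofReal_mul_volume_closedBall_le (m : ℕ) {a r : ℝ} (ha : 0 ≤ a) (hr : 0 ≤ r)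
    (har : a ^ 2 + r ^ 2 ≤ 1) :
    ENNReal.ofReal (2 * a * r ^ m) * volume (closedBall (0 : EuclideanSpace ℝ (Fin m)) 1)
      ≤ volume (closedBall (0 : EuclideanSpace ℝ (Fin (m + 1))) 1) := by
  calc _ = volume (headTailEquiv m ⁻¹' Icc (-a) a ×ˢ closedBall 0 r) := by
        rw [volume_preimage_headTailEquiv_prod, Real.volume_Icc,
          Measure.addHaar_closedBall' _ _ hr, finrank_euclideanSpace_fin, ← mul_assoc,
          ← ENNReal.ofReal_mul (by linarith)]
        ring_nf
    _ ≤ _ := by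
        refine measure_mono fun θ ⟨hfst, hsnd⟩ => ?_
        rw [mem_closedBall_zero_iff] at hsnd ⊢
        have hfst_sq := sq_le_sq' hfst.1 hfst.2
        have hsnd_sq := pow_le_pow_left₀ (norm_nonneg _) hsnd 2
        nlinarith [norm_sq_eq_headTailEquiv θ, norm_nonneg θ]

theorem volume_closedBall_inter_abs_inner_lt_le (m : ℕ) (v : EuclideanSpace ℝ (Fin (m + 1)))
    (s : ℝ) :
    volume (closedBall (0 : EuclideanSpace ℝ (Fin (m + 1))) 1 ∩ {θ | |inner ℝ v θ| < s * ‖v‖})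
      ≤ ENNReal.ofReal (2 * s) * volume (closedBall (0 : EuclideanSpace ℝ (Fin m)) 1) := by
  -- the reflection `R` sending `v` to `‖v‖ • e₀` turns the set into a coordinate slab
  set w : EuclideanSpace ℝ (Fin (m + 1)) := ‖v‖ • single 0 1
  set R := Submodule.reflection (ℝ ∙ (v - w))ᗮ
  have hRv : R v = w := Submodule.reflection_sub (by simp [w, norm_smul])
  refine le_trans (measure_mono fun θ ⟨hθ, hs⟩ => ?_)
    ((R.measurePreserving.measure_preimage_le _).trans (volume_closedBall_inter_abs_lt_le m s))
  have hinner : inner ℝ v θ = ‖v‖ * R θ 0 := by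
    rw [← R.inner_map_map, hRv, real_inner_smul_left, inner_single_left]
    simp
  refine ⟨by simpa using hθ, ?_⟩
  rw [mem_ofPred_eq, hinner, abs_mul, abs_norm, mul_comm s] at hs
  exact lt_of_mul_lt_mul_left hs (norm_nonneg v)

theorem ofReal_two_div_sqrt_mul_volume_closedBall_le (m : ℕ) :
    ENNReal.ofReal (2 / √(Real.exp 1 * (m + 1)))
        * volume (closedBall (0 : EuclideanSpace ℝ (Fin m)) 1)
      ≤ volume (closedBall (0 : EuclideanSpace ℝ (Fin (m + 1))) 1) := by
  set a : ℝ := (√(m + 1))⁻¹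
  set r : ℝ := √(m / (m + 1))
  have har : a ^ 2 + r ^ 2 = 1 := by
    rw [inv_pow, Real.sq_sqrt (by positivity), Real.sq_sqrt (by positivity)]
    field_simp
    ring
  have hpow : (√(Real.exp 1))⁻¹ ≤ r ^ m := by
    rw [← pow_le_pow_iff_left₀ (by positivity) (by positivity) two_ne_zero, ← pow_mul, mul_comm,
      pow_mul, Real.sq_sqrt (by positivity), inv_pow, Real.sq_sqrt (Real.exp_pos 1).le,
      ← Real.exp_neg]
    exact Real.exp_neg_one_le_div_succ_pow m
  refine le_trans (mul_le_mul_left (ENNReal.ofReal_le_ofReal ?_) _)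
    (ofReal_mul_volume_closedBall_le m (by positivity) (by positivity) har.le)
  calc 2 / √(Real.exp 1 * (m + 1)) = 2 * a * (√(Real.exp 1))⁻¹ := by
        rw [Real.sqrt_mul (Real.exp_pos 1).le]
        simp only [a]
        field_simp
    _ ≤ 2 * a * r ^ m := by gcongr

/-- Excluding the null set `{0}` from the bad set lets the point found be normalised. -/
theorem exists_norm_eq_one_forall_mul_norm_le_abs_inner {ι : Type*} (m : ℕ) (K : Finset ι)
    (v : ι → EuclideanSpace ℝ (Fin (m + 1))) {s : ℝ}
    (hs : K.card * s < 1 / √(Real.exp 1 * (m + 1))) :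
    ∃ θ : EuclideanSpace ℝ (Fin (m + 1)), ‖θ‖ = 1 ∧ ∀ k ∈ K, s * ‖v k‖ ≤ |inner ℝ (v k) θ| := by
  set V := volume (closedBall (0 : EuclideanSpace ℝ (Fin m)) 1)
  set bad : ι → Set (EuclideanSpace ℝ (Fin (m + 1))) :=
    fun k => closedBall 0 1 ∩ {θ | |inner ℝ (v k) θ| < s * ‖v k‖}
  have hcard : (K.card : ENNReal) * ENNReal.ofReal (2 * s)
      < ENNReal.ofReal (2 / √(Real.exp 1 * (m + 1))) := by
    rw [← ENNReal.ofReal_natCast, ← ENNReal.ofReal_mul (Nat.cast_nonneg _),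
      ENNReal.ofReal_lt_ofReal_iff (by positivity), mul_left_comm, div_eq_mul_one_div 2]
    linarith
  have hlt : volume ({0} ∪ ⋃ k ∈ K, bad k)
      < volume (closedBall (0 : EuclideanSpace ℝ (Fin (m + 1))) 1) :=
    calc volume ({0} ∪ ⋃ k ∈ K, bad k) ≤ ∑ k ∈ K, volume (bad k) := by
          grw [measure_union_le, measure_singleton, zero_add, measure_biUnion_finset_le]
      _ ≤ K.card • (ENNReal.ofReal (2 * s) * V) :=
          Finset.sum_le_card_nsmul _ _ _ fun k _ =>
            volume_closedBall_inter_abs_inner_lt_le m (v k) s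
      _ < ENNReal.ofReal (2 / √(Real.exp 1 * (m + 1))) * V := by
          rw [nsmul_eq_mul, ← mul_assoc]
          exact ENNReal.mul_lt_mul_left (measure_closedBall_pos _ _ one_pos).ne'
            measure_closedBall_lt_top.ne hcard
      _ ≤ _ := ofReal_two_div_sqrt_mul_volume_closedBall_le m
  obtain ⟨θ, hθ_ball, hθ_good⟩ := not_subset.1 fun h => (measure_mono h).not_gt hlt
  simp only [mem_union, mem_singleton_iff, mem_iUnion, not_or, not_exists] at hθ_good
  refine ⟨‖θ‖⁻¹ • θ, norm_smul_inv_norm hθ_good.1, fun k hk => ?_⟩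
  have hθ_norm : ‖θ‖ ≤ 1 := mem_closedBall_zero_iff.1 hθ_ball
  calc s * ‖v k‖ ≤ |inner ℝ (v k) θ| := not_lt.1 fun h => hθ_good.2 k hk ⟨hθ_ball, h⟩
    _ ≤ ‖θ‖⁻¹ * |inner ℝ (v k) θ| :=
        le_mul_of_one_le_left (abs_nonneg _) (one_le_inv₀ (norm_pos_iff.2 hθ_good.1) |>.2 hθ_norm)
    _ = |inner ℝ (v k) (‖θ‖⁻¹ • θ)| := by
        rw [real_inner_smul_right, abs_mul, abs_of_nonneg (inv_nonneg.2 (norm_nonneg θ))]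

end EuclideanSpace

/-- given `N` points of `ℝⁿ` with pairwise distances at least `γ`, there is
a unit vector `θ` such that the projections `xᵢ·θ` are pairwise at distance at least
`γ/(√(e·n)·N²)`. -/
theorem exists_good_projection (n N : ℕ) (hN : 2 ≤ N) (γ : ℝ) (hγ : 0 < γ)
    (x : Fin N → EuclideanSpace ℝ (Fin n))
    (hx : ∀ i j : Fin N, i ≠ j → γ ≤ ‖x i - x j‖) :
    ∃ θ : EuclideanSpace ℝ (Fin n), ‖θ‖ = 1 ∧ ∀ i j : Fin N, i ≠ j →
      γ / (Real.sqrt (Real.exp 1 * n) * (N : ℝ) ^ 2)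
        ≤ |(inner ℝ (x i) θ : ℝ) - (inner ℝ (x j) θ : ℝ)| := by
  have hn : n ≠ 0 := by
    rintro rfl
    have h := hx ⟨0, by omega⟩ ⟨1, by omega⟩ (by simp)
    rw [Subsingleton.elim (x _ - x _) 0, norm_zero] at h
    exact hγ.not_ge h
  obtain ⟨m, rfl⟩ : ∃ m, n = m + 1 := ⟨n - 1, by omega⟩
  set s := 1 / (√(Real.exp 1 * (m + 1)) * (N : ℝ) ^ 2)
  have hK : ((Finset.univ : Finset (Fin N)).offDiag.card : ℝ) < N ^ 2 := by
    rw [Finset.offDiag_card, Finset.card_univ, Fintype.card_fin]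
    exact_mod_cast (Nat.sub_lt (by positivity) (by omega)).trans_eq (sq N).symm
  obtain ⟨θ, hθ, hgood⟩ := EuclideanSpace.exists_norm_eq_one_forall_mul_norm_le_abs_inner m
    Finset.univ.offDiag (fun p => x p.1 - x p.2) (s := s) <|
    calc _ = _ / (N : ℝ) ^ 2 * (1 / √(Real.exp 1 * (m + 1))) := by ring
      _ < 1 * (1 / √(Real.exp 1 * (m + 1))) := by
          gcongr
          exact (div_lt_one (by positivity)).2 hK
      _ = _ := one_mul _
  refine ⟨θ, hθ, fun i j hij => ?_⟩
  calc γ / (√(Real.exp 1 * ↑(m + 1)) * (N : ℝ) ^ 2) = s * γ := by push_cast; ring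
    _ ≤ s * ‖x i - x j‖ := by gcongr; exact hx i j hij
    _ ≤ _ := hgood (i, j) (by simpa using hij)
    _ = _ := by rw [inner_sub_left]
end

section
/- For t ≥ n+1 and δ > 0, define the n-variate exponential t-sum g_{t,n}(z) := (e^{δ z_1} + 1)^{t−n} + e^{δ z_2} + ... + e^{δ z_n}. Then the Hausdorff distance between Re(Z(g_{t,n})) and Trop(g_{t,n}) is at least log(t−n)/δ. -/
noncomputable section

/-- The frequencies of `g_{t,n}(z) = (e^{δz₁}+1)^{t-n} + e^{δz₂} + ⋯ + e^{δzₙ}`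
after binomial expansion: `jδe₁` for `0 ≤ j ≤ t-n`, together with `δe₂,…,δeₙ`. -/
def freq18 (n t : ℕ) (δ : ℝ) : Fin (t - n + 1) ⊕ Fin (n - 1) → EuclideanSpace ℝ (Fin n)
  | .inl j => WithLp.toLp 2 (fun i => if (i : ℕ) = 0 then (j : ℝ) * δ else 0)
  | .inr i' => WithLp.toLp 2 (fun i => if (i : ℕ) = (i' : ℕ) + 1 then δ else 0)

/-- The corresponding `log |coefficient|` data: `log C(t-n, j)` for the term `jδe₁`,
and `0` for the terms `δe₂,…,δeₙ`. -/
def coeff18 (n t : ℕ) : Fin (t - n + 1) ⊕ Fin (n - 1) → ℝ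
  | .inl j => Real.log (Nat.choose (t - n) j)
  | .inr _ => 0

/-- The Archimedean tropical variety of `g_{t,n}`. -/
def Trop18 (n t : ℕ) (δ : ℝ) : Set (EuclideanSpace ℝ (Fin n)) :=
  {w | ∃ j k : Fin (t - n + 1) ⊕ Fin (n - 1), j ≠ k ∧
    (∀ i, dotR (freq18 n t δ i) w + coeff18 n t i ≤ dotR (freq18 n t δ j) w + coeff18 n t j) ∧
    dotR (freq18 n t δ j) w + coeff18 n t j = dotR (freq18 n t δ k) w + coeff18 n t k}

/-- `Re(Z(g_{t,n}))`. -/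
def ReZ18 (n t : ℕ) (hn : 1 ≤ n) (δ : ℝ) : Set (EuclideanSpace ℝ (Fin n)) :=
  {x | ∃ z : Fin n → ℂ,
    (Complex.exp (δ * z ⟨0, hn⟩) + 1) ^ (t - n)
        + ∑ i ∈ Finset.univ.filter (fun i : Fin n => (i : ℕ) ≠ 0), Complex.exp (δ * z i) = 0
      ∧ rePart z = x}

/-! The tropical variety contains `w = (L, -K, …, -K)` with `δ L = log (t - n)`: there the
binomial terms `j = t - n` and `j = t - n - 1` tie at `(t - n) log (t - n)`, because
`C(t - n, j) ≤ (t - n) ^ (t - n - j)`. A point `x` within distance `c < L` of `w` has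
`|e^{δz₁} + 1| ^ (t - n) ≥ (e^{δ(L - c)} - 1) ^ (t - n) > 0`, while each remaining term has
modulus at most `e^{δ(c - K)}`; for `K` large they cannot cancel, so `x ∉ Re(Z(g))`. Letting
`c → L` gives the bound. -/

open Real Finset Filter Topology

lemma log_choose_le_mul_log {m j : ℕ} (hj : j ≤ m) :
    log (m.choose j) ≤ ((m : ℝ) - j) * log m := by
  have hle : (m.choose j : ℝ) ≤ (m : ℝ) ^ (m - j) := by
    rw [← Nat.choose_symm hj]
    exact_mod_cast Nat.choose_le_pow m (m - j)
  calc log (m.choose j) ≤ log ((m : ℝ) ^ (m - j)) :=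
        log_le_log (by exact_mod_cast Nat.choose_pos hj) hle
    _ = ((m : ℝ) - j) * log m := by rw [log_pow, Nat.cast_sub hj]

section Tropical

variable {n t : ℕ} {δ : ℝ}

lemma dotR_ite_val_eq {k : Fin n} (a : ℝ) (w : Fin n → ℝ) :
    dotR (fun i : Fin n => if (i : ℕ) = k then a else 0) w = a * w k := by
  simp [dotR, Fin.val_inj]

lemma dotR_freq18_inl (hn : 1 ≤ n) (j : Fin (t - n + 1)) (w : EuclideanSpace ℝ (Fin n)) :
    dotR (freq18 n t δ (.inl j)) w = j * δ * w ⟨0, hn⟩ :=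
  dotR_ite_val_eq (k := ⟨0, hn⟩) _ w

lemma dotR_freq18_inr (i : Fin (n - 1)) (w : EuclideanSpace ℝ (Fin n)) :
    dotR (freq18 n t δ (.inr i)) w = δ * w ⟨i + 1, by omega⟩ :=
  dotR_ite_val_eq (k := ⟨i + 1, _⟩) _ w

lemma toLp_ite_mem_Trop18 (hn : 1 ≤ n) (ht : n + 1 ≤ t) {a b : ℝ}
    (ha : δ * a = log (t - n : ℕ)) (hb : δ * b ≤ 0) :
    WithLp.toLp 2 (fun i : Fin n => if (i : ℕ) = 0 then a else b) ∈ Trop18 n t δ := by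
  set w := WithLp.toLp 2 (fun i : Fin n => if (i : ℕ) = 0 then a else b)
  set m := t - n
  have hm : 1 ≤ m := by omega
  have hinl (j : Fin (m + 1)) : dotR (freq18 n t δ (.inl j)) w + coeff18 n t (.inl j)
      = j * log m + log (m.choose j) := by
    rw [dotR_freq18_inl hn, mul_assoc, show w ⟨0, hn⟩ = a by simp [w], ha]
    rfl
  have hinr (i : Fin (n - 1)) :
      dotR (freq18 n t δ (.inr i)) w + coeff18 n t (.inr i) = δ * b := by
    rw [dotR_freq18_inr, show w ⟨i + 1, by omega⟩ = b by simp [w]]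
    exact add_zero _
  have hmax : (m : ℝ) * log m = dotR (freq18 n t δ (.inl (Fin.last m))) w
      + coeff18 n t (.inl (Fin.last m)) := by
    simp [hinl]
  refine ⟨.inl (Fin.last m), .inl ⟨m - 1, by omega⟩, ?_, ?_, ?_⟩
  · simp only [ne_eq, Sum.inl.injEq, Fin.ext_iff, Fin.val_last]
    omega
  · rw [← hmax]
    rintro (j | i)
    · rw [hinl]
      linarith [log_choose_le_mul_log (Nat.le_of_lt_succ j.isLt)]
    · rw [hinr]
      have : 0 ≤ (m : ℝ) * log m := mul_nonneg m.cast_nonneg (log_natCast_nonneg m)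
      linarith
  · rw [← hmax, hinl, Nat.choose_symm hm, Nat.choose_one_right, Nat.cast_sub hm]
    push_cast
    ring

end Tropical

lemma pow_le_sum_of_mem_ReZ18 {n t : ℕ} {hn : 1 ≤ n} {δ : ℝ} {x : EuclideanSpace ℝ (Fin n)}
    (hx : x ∈ ReZ18 n t hn δ) (hx₀ : 0 ≤ δ * x ⟨0, hn⟩) :
    (exp (δ * x ⟨0, hn⟩) - 1) ^ (t - n)
      ≤ ∑ i ∈ univ.filter (fun i : Fin n => (i : ℕ) ≠ 0), exp (δ * x i) := by
  obtain ⟨z, hz, rfl⟩ := hx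
  have hnorm (i : Fin n) : ‖Complex.exp (δ * z i)‖ = exp (δ * rePart z i) := by
    rw [Complex.norm_exp, Complex.re_ofReal_mul]
    rfl
  have hE : exp (δ * rePart z ⟨0, hn⟩) - 1 ≤ ‖Complex.exp (δ * z ⟨0, hn⟩) + 1‖ := by
    simpa [hnorm] using norm_sub_norm_le (Complex.exp (δ * z ⟨0, hn⟩)) (-1 : ℂ)
  calc (exp (δ * rePart z ⟨0, hn⟩) - 1) ^ (t - n)
      ≤ ‖Complex.exp (δ * z ⟨0, hn⟩) + 1‖ ^ (t - n) :=
        pow_le_pow_left₀ (sub_nonneg.2 (one_le_exp hx₀)) hE _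
    _ = ‖∑ i ∈ univ.filter (fun i : Fin n => (i : ℕ) ≠ 0), Complex.exp (δ * z i)‖ := by
        rw [← norm_pow, eq_neg_of_add_eq_zero_left hz, norm_neg]
    _ ≤ ∑ i ∈ univ.filter (fun i : Fin n => (i : ℕ) ≠ 0), exp (δ * rePart z i) :=
        (norm_sum_le _ _).trans_eq (sum_congr rfl fun i _ => hnorm i)

lemma le_dist_of_mem_ReZ18 {n t : ℕ} {hn : 1 ≤ n} {δ L c K : ℝ} (hδ : 0 < δ) (hc : c < L)
    (hK : n * exp (δ * (c - K)) < (exp (δ * (L - c)) - 1) ^ (t - n))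
    {x : EuclideanSpace ℝ (Fin n)} (hx : x ∈ ReZ18 n t hn δ) :
    c ≤ dist (WithLp.toLp 2 (fun i : Fin n => if (i : ℕ) = 0 then L else -K)) x := by
  set w := WithLp.toLp 2 (fun i : Fin n => if (i : ℕ) = 0 then L else -K)
  by_contra! hfar
  have hcoord (i : Fin n) : |w i - x i| < c :=
    (Real.dist_eq _ _ ▸ PiLp.dist_apply_le w x i).trans_lt hfar
  have hx₀ : L - c < x ⟨0, hn⟩ := by
    have := hcoord ⟨0, hn⟩
    simp only [w, if_pos] at this
    linarith [abs_lt.1 this]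
  have hxi (i : Fin n) (hi : (i : ℕ) ≠ 0) : x i < c - K := by
    have := hcoord i
    simp only [w, if_neg hi] at this
    linarith [abs_lt.1 this]
  have hδLc : 0 < δ * (L - c) := mul_pos hδ (sub_pos.2 hc)
  have hβ : 0 ≤ exp (δ * (L - c)) - 1 := sub_nonneg.2 (one_le_exp hδLc.le)
  have hsum := pow_le_sum_of_mem_ReZ18 hx (hδLc.trans (by gcongr)).le
  have : n * exp (δ * (c - K)) < n * exp (δ * (c - K)) := calc
    n * exp (δ * (c - K)) < (exp (δ * (L - c)) - 1) ^ (t - n) := hK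
    _ ≤ (exp (δ * x ⟨0, hn⟩) - 1) ^ (t - n) := by gcongr
    _ ≤ ∑ i ∈ univ.filter (fun i : Fin n => (i : ℕ) ≠ 0), exp (δ * x i) := hsum
    _ ≤ ∑ _i ∈ univ.filter (fun i : Fin n => (i : ℕ) ≠ 0), exp (δ * (c - K)) := by
      gcongr with i hi
      exact (hxi i (mem_filter.1 hi).2).le
    _ ≤ n * exp (δ * (c - K)) := by
      rw [sum_const, nsmul_eq_mul]
      gcongr
      exact_mod_cast (card_filter_le _ _).trans_eq (card_fin n)
  exact lt_irrefl _ this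

lemma exists_mem_Trop18_forall_le_dist (n t : ℕ) (hn : 1 ≤ n) (ht : n + 1 ≤ t)
    {δ : ℝ} (hδ : 0 < δ) {c : ℝ} (hc : c < log ((t : ℝ) - n) / δ) :
    ∃ w ∈ Trop18 n t δ, ∀ x ∈ ReZ18 n t hn δ, c ≤ dist w x := by
  set L := log ((t : ℝ) - n) / δ
  have hδL : δ * L = log (t - n : ℕ) := by
    rw [Nat.cast_sub (by omega)]
    exact mul_div_cancel₀ _ hδ.ne'
  have hβ : 0 < exp (δ * (L - c)) - 1 := sub_pos.2 (one_lt_exp_iff.2 (mul_pos hδ (sub_pos.2 hc)))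
  have hcK : Tendsto (fun K : ℝ => c - K) atTop atBot := by
    simpa [sub_eq_add_neg] using tendsto_atBot_add_const_left _ c tendsto_neg_atTop_atBot
  have hlim : Tendsto (fun K : ℝ => n * exp (δ * (c - K))) atTop (𝓝 0) := by
    simpa using (tendsto_exp_atBot.comp (hcK.const_mul_atBot hδ)).const_mul (n : ℝ)
  obtain ⟨K, hK, hK₀⟩ :=
    ((hlim.eventually (gt_mem_nhds (pow_pos hβ (t - n)))).and (eventually_ge_atTop 0)).exists
  have hδK : δ * -K ≤ 0 := mul_nonpos_of_nonneg_of_nonpos hδ.le (neg_nonpos.2 hK₀)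
  exact ⟨_, toLp_ite_mem_Trop18 hn ht hδL hδK, fun x hx => le_dist_of_mem_ReZ18 hδ hc hK hx⟩

/-- the Hausdorff distance between `Re(Z(g_{t,n}))` and `Trop(g_{t,n})`
is at least `log(t-n)/δ`. -/
theorem hausdorff_lower_bound (n t : ℕ) (hn : 1 ≤ n) (ht : n + 1 ≤ t)
    (δ : ℝ) (hδ : 0 < δ) :
    ENNReal.ofReal (Real.log ((t : ℝ) - (n : ℝ)) / δ)
      ≤ EMetric.hausdorffEdist (ReZ18 n t hn δ) (Trop18 n t δ) := by
  refine le_of_forall_lt_imp_le_of_dense fun e he => ?_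
  obtain ⟨w, hw, hfar⟩ :=
    exists_mem_Trop18_forall_le_dist n t hn ht hδ (ENNReal.toReal_lt_of_lt_ofReal he)
  rw [← ENNReal.ofReal_toReal (ne_top_of_lt he)]
  calc ENNReal.ofReal e.toReal ≤ Metric.infEDist w (ReZ18 n t hn δ) :=
        Metric.le_infEDist.2 fun x hx => edist_dist w x ▸ ENNReal.ofReal_le_ofReal (hfar x hx)
    _ ≤ Metric.hausdorffEDist (Trop18 n t δ) (ReZ18 n t hn δ) :=
        Metric.infEDist_le_hausdorffEDist_of_mem hw
    _ = _ := Metric.hausdorffEDist_comm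
end
end
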